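/- arXiv:2211.11718 — 6 statements merged into one kernel-verified Lean document; each statement's English description precedes it below -/
import Mathlib

section
/- Fix positive integers k, M, n and reals ε, δ, α ≥ 0, β ∈ [0,1]. If there exists an (ε,δ)-DP algorithm (under event-level neighbors) for cumulative freq≥k in the bundle setting on datasets with time horizon T = M over a universe of size U ≥ n having (α, β/2)-utility, then there exists an (ε,δ)-DP algorithm for the 1d-range query problem with domain {1,...,M} on inputs of at most n points having (2α, β)-utility. -/
open Finset

/-- `(ε, δ)`-differential privacy of a randomized algorithm `M`
with respect to the neighboring relation `neighbor`. -/
def IsDP {I O : Type} (neighbor : I → I → Prop) (M : I → PMF O) (ε δ : ℝ) : Prop :=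
  ∀ D D', neighbor D D' → ∀ s : Set O,
    (M D).toOuterMeasure s ≤
      ENNReal.ofReal (Real.exp ε) * (M D').toOuterMeasure s + ENNReal.ofReal δ

/-- `(α, β)`-utility: for every input and every query, with probability at least
`1 - β` the output estimate is within `α` of the true value. -/
def HasUtility {I Q : Type} (M : I → PMF (Q → ℝ)) (val : I → Q → ℝ) (α β : ℝ) : Prop :=
  ∀ D q, ENNReal.ofReal (1 - β) ≤ (M D).toOuterMeasure {o | |o q - val D q| ≤ α}

/-- A dataset with time horizon `T` over universe `[U]`:
`S t u` is the multiplicity of item `u` at (0-indexed) time step `t`. -/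
abbrev Dataset (T U : ℕ) : Type := Fin T → Fin U → ℕ

/-- `S^{[t₁, t₂]}_u` with 1-indexed times: total multiplicity of item `u`
during time steps `t₁, ..., t₂`. -/
def winCount {T U : ℕ} (S : Dataset T U) (t₁ t₂ : ℕ) (u : Fin U) : ℕ :=
  ∑ t : Fin T, if t₁ ≤ (t : ℕ) + 1 ∧ (t : ℕ) + 1 ≤ t₂ then S t u else 0

/-- `freq≥k(S^{[t₁,t₂]})`: the number of items occurring at least `k` times. -/
def freqGe {T U : ℕ} (k : ℕ) (S : Dataset T U) (t₁ t₂ : ℕ) : ℕ :=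
  (Finset.univ.filter fun u : Fin U => k ≤ winCount S t₁ t₂ u).card

/-- `freq=k(S^{[t₁,t₂]})`: the number of items occurring exactly `k` times. -/
def freqEq {T U : ℕ} (k : ℕ) (S : Dataset T U) (t₁ t₂ : ℕ) : ℕ :=
  (Finset.univ.filter fun u : Fin U => winCount S t₁ t₂ u = k).card

/-- Item-level neighbors: the datasets agree on all items except possibly one. -/
def ItemNeighbor {T U : ℕ} (S S' : Dataset T U) : Prop :=
  ∃ u : Fin U, ∀ u' : Fin U, u' ≠ u → ∀ t : Fin T, S t u' = S' t u'

/-- Event-level neighbors: the total (absolute) difference of multiplicities is at most 1. -/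
def EventNeighbor {T U : ℕ} (S S' : Dataset T U) : Prop :=
  (∑ t : Fin T, ∑ u : Fin U, ((S t u : ℤ) - (S' t u : ℤ)).natAbs) ≤ 1

/-- Singleton setting: at most one item arrives at each time step. -/
def IsSingleton {T U : ℕ} (S : Dataset T U) : Prop :=
  ∀ t : Fin T, (∑ u : Fin U, S t u) ≤ 1

/-- Cumulative `freq≥k` queries: the query indexed by `t : Fin T` is
`freq≥k(S^{[1, t+1]})`. -/
def cumVal (k : ℕ) {T U : ℕ} (S : Dataset T U) (t : Fin T) : ℝ :=
  (freqGe k S 1 ((t : ℕ) + 1) : ℝ)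

/-- Time-window `freq≥k` queries: the query indexed by a pair `t₁ ≤ t₂` (0-indexed)
is `freq≥k(S^{[t₁+1, t₂+1]})`. -/
def twVal (k : ℕ) {T U : ℕ} (S : Dataset T U)
    (p : {p : Fin T × Fin T // p.1 ≤ p.2}) : ℝ :=
  (freqGe k S ((p.1.1 : ℕ) + 1) ((p.1.2 : ℕ) + 1) : ℝ)

/-- Time-window `freq=k` queries. -/
def twValEq (k : ℕ) {T U : ℕ} (S : Dataset T U)
    (p : {p : Fin T × Fin T // p.1 ≤ p.2}) : ℝ :=
  (freqEq k S ((p.1.1 : ℕ) + 1) ((p.1.2 : ℕ) + 1) : ℝ)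

/-- Fixed-window `freq≥k` queries with window `W`: the query indexed by
`i : Fin (T - W + 1)` is `freq≥k(S^{[i+1, i+W]})`. -/
def fwVal (k W : ℕ) {T U : ℕ} (S : Dataset T U) (i : Fin (T - W + 1)) : ℝ :=
  (freqGe k S ((i : ℕ) + 1) ((i : ℕ) + W) : ℝ)

/-- Neighboring inputs for range-query-type problems: they differ by adding
or removing a single point. -/
def AddRemoveNeighbor {P : Type} (D D' : Multiset P) : Prop :=
  ∃ x : P, D' = x ::ₘ D ∨ D = x ::ₘ D'

/-- 1d-range queries over a linearly ordered finite domain `Fin M`: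
the query indexed by `y₁ ≤ y₂` counts the points in `[y₁, y₂]`. -/
def range1Val {M : ℕ} (D : Multiset (Fin M))
    (p : {p : Fin M × Fin M // p.1 ≤ p.2}) : ℝ :=
  ((D.filter fun x => p.1.1 ≤ x ∧ x ≤ p.1.2).card : ℝ)

/-- 2d-range queries over the domain `Fin M × Fin M`: the query indexed by a pair
`(y¹, y²)` counts the points `x` with `y¹ ⪯ x ⪯ y²` coordinatewise. -/
def range2Val {M : ℕ} (D : Multiset (Fin M × Fin M))
    (p : (Fin M × Fin M) × (Fin M × Fin M)) : ℝ :=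
  ((D.filter fun x =>
      p.1.1 ≤ x.1 ∧ p.1.2 ≤ x.2 ∧ x.1 ≤ p.2.1 ∧ x.2 ≤ p.2.2).card : ℝ)

/-- Neighboring inputs for the linear query problem: they differ
in a single coordinate. -/
def CoordNeighbor {m : ℕ} (x x' : Fin m → Bool) : Prop :=
  ∃ u : Fin m, ∀ u' : Fin m, u' ≠ u → x u' = x' u'

/-- The `A`-linear queries: the query indexed by `i : Fin d` is `(A x)_i`. -/
def linVal {d m : ℕ} (A : Fin d → Fin m → Bool) (x : Fin m → Bool) (i : Fin d) : ℝ :=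
  ((∑ u : Fin m, if A i u && x u then 1 else 0 : ℕ) : ℝ)

/-- The 1-way marginal queries: the query indexed by `i : Fin d` is the `i`-th
coordinate of the sum of the input vectors. -/
def margVal {d : ℕ} (D : Multiset (Fin d → Bool)) (i : Fin d) : ℝ :=
  (((D.map fun x => if x i then (1 : ℕ) else 0).sum : ℕ) : ℝ)

/-!
Encode a point set `D` with `|D| ≤ U` as a dataset in which every item gets `k - 1` copies at the
first time step, and the items are matched to the points of `D` in sorted order through a uniformly
random permutation `σ` of the universe, each item receiving one further copy at the time of its
point. Then `freq≥k(S^{[1,t]})` is the number of points `≤ t`, so a range count is the difference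
of two cumulative answers and a union bound turns `(α, β/2)` into `(2α, β)`.

Adding a point `x` to `D` inserts it into the sorted list and shifts the later points by one
position. Precomposing `σ` with the cycle that undoes this shift makes the two encodings differ in
a single event, and the uniform distribution on permutations is invariant under that precomposition,
so the privacy guarantee transfers.
-/

namespace PMF

variable {α β : Type*}

lemma ofReal_add_sub_one_le_toOuterMeasure_inter (p : PMF α) {s t : Set α} {a b : ℝ}
    (hs : ENNReal.ofReal a ≤ p.toOuterMeasure s) (ht : ENNReal.ofReal b ≤ p.toOuterMeasure t) :
    ENNReal.ofReal (a + b - 1) ≤ p.toOuterMeasure (s ∩ t) := by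
  rcases le_or_gt (a + b - 1) 0 with hab | hab
  · simp [ENNReal.ofReal_of_nonpos hab]
  have hunion : p.toOuterMeasure s + p.toOuterMeasure t ≤ p.toOuterMeasure (s ∩ t) + 1 := by
    simp only [toOuterMeasure_apply, ← p.tsum_coe, ← ENNReal.tsum_add]
    refine ENNReal.tsum_le_tsum fun x => ?_
    by_cases hxs : x ∈ s <;> by_cases hxt : x ∈ t <;> simp [hxs, hxt]
  refine (ENNReal.add_le_add_iff_right ENNReal.one_ne_top).mp ?_
  calc ENNReal.ofReal (a + b - 1) + 1 = ENNReal.ofReal (a + b) := by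
        rw [← ENNReal.ofReal_one, ← ENNReal.ofReal_add hab.le zero_le_one, sub_add_cancel]
    _ ≤ ENNReal.ofReal a + ENNReal.ofReal b := ENNReal.ofReal_add_le
    _ ≤ _ := (add_le_add hs ht).trans hunion

lemma le_toOuterMeasure_bind {p : PMF α} {f : α → PMF β} {s : Set β} {c : ENNReal}
    (h : ∀ a, c ≤ (f a).toOuterMeasure s) : c ≤ (p.bind f).toOuterMeasure s := by
  rw [toOuterMeasure_bind_apply]
  calc c = ∑' a, p a * c := by rw [ENNReal.tsum_mul_right, p.tsum_coe, one_mul]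
    _ ≤ _ := ENNReal.tsum_le_tsum fun a => mul_le_mul_right (h a) _

end PMF

lemma IsDP.bind_uniform {I J O O' G : Type} [Group G] [Fintype G] {N₁ : I → I → Prop}
    {N₂ : J → J → Prop} {M : I → PMF O} {ε δ : ℝ} (hM : IsDP N₁ M ε δ) (enc : J → G → I)
    (post : O → O') (hcoupling : ∀ D D', N₂ D D' → ∃ π : G, ∀ σ, N₁ (enc D σ) (enc D' (π * σ))) :
    IsDP N₂ (fun D => (PMF.uniformOfFintype G).bind fun σ => (M (enc D σ)).map post) ε δ := by
  intro D D' hDD' s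
  obtain ⟨π, hπ⟩ := hcoupling D D' hDD'
  set c : ENNReal := (Fintype.card G : ENNReal)⁻¹
  have hmix : ∀ E, ((PMF.uniformOfFintype G).bind fun σ => (M (enc E σ)).map post).toOuterMeasure s
      = ∑ σ, c * (M (enc E σ)).toOuterMeasure (post ⁻¹' s) := by
    intro E
    simp only [PMF.toOuterMeasure_bind_apply, PMF.toOuterMeasure_map_apply,
      PMF.uniformOfFintype_apply, tsum_fintype, c]
  have hshift : ∑ σ, c * (M (enc D' (π * σ))).toOuterMeasure (post ⁻¹' s)
      = ∑ σ, c * (M (enc D' σ)).toOuterMeasure (post ⁻¹' s) :=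
    Equiv.sum_comp (Equiv.mulLeft π) fun σ => c * (M (enc D' σ)).toOuterMeasure (post ⁻¹' s)
  have hc : ∑ _σ : G, c = 1 := by
    simp [c, Finset.card_univ, ENNReal.mul_inv_cancel]
  rw [hmix, hmix, ← hshift, Finset.mul_sum]
  calc ∑ σ, c * (M (enc D σ)).toOuterMeasure (post ⁻¹' s)
      ≤ ∑ σ, c * (ENNReal.ofReal (Real.exp ε) * (M (enc D' (π * σ))).toOuterMeasure (post ⁻¹' s)
          + ENNReal.ofReal δ) :=
        Finset.sum_le_sum fun σ _ => mul_le_mul_right (hM _ _ (hπ σ) _) _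
    _ = _ := by
        simp only [mul_add, Finset.sum_add_distrib, ← Finset.sum_mul, hc, one_mul]
        congr 1
        exact Finset.sum_congr rfl fun σ _ => by ring

lemma List.card_filter_getElem?_eq_card_filter {α : Type*} {U : ℕ} (L : List α)
    (hL : L.length ≤ U) (q : α → Prop) [DecidablePred q] :
    #{j : Fin U | ∃ w ∈ L[(j : ℕ)]?, q w} = (Multiset.filter q (L : Multiset α)).card := by
  have hfin : (Multiset.filter q (L : Multiset α)).card = #{i : Fin L.length | q L[i]} := by
    conv_lhs => rw [← List.ofFn_getElem (xs := L), ← Fin.univ_val_map]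
    rw [Multiset.filter_map, Multiset.card_map]
    rfl
  rw [hfin]
  symm
  refine Finset.card_bij (fun i _ => Fin.castLE hL i) (fun i hi => ?_)
    (fun i _ i' _ h => Fin.castLE_injective hL h) (fun j hj => ?_)
  · simp only [Finset.mem_filter, Finset.mem_univ, true_and] at hi ⊢
    exact ⟨L[i], by simp, hi⟩
  · simp only [Finset.mem_filter, Finset.mem_univ, true_and] at hj
    obtain ⟨w, hw, hqw⟩ := hj
    obtain ⟨hj, rfl⟩ := List.getElem?_eq_some_iff.mp hw
    exact ⟨⟨j, hj⟩, by simpa using hqw, rfl⟩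

lemma Multiset.exists_sort_eq_append_and_sort_cons_eq {α : Type*} [LinearOrder α]
    (D : Multiset α) (x : α) :
    ∃ A B : List α, D.sort (· ≤ ·) = A ++ B ∧ (x ::ₘ D).sort (· ≤ ·) = A ++ x :: B := by
  induction D using Quotient.inductionOn with
  | h l =>
    refine ⟨(l.insertionSort (· ≤ ·)).takeWhile fun b => ¬x ≤ b,
      (l.insertionSort (· ≤ ·)).dropWhile fun b => ¬x ≤ b, ?_, ?_⟩
    · simp only [Multiset.quot_mk_to_coe, Multiset.coe_sort, List.mergeSort_eq_insertionSort,
        List.takeWhile_append_dropWhile]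
    · simp only [Multiset.quot_mk_to_coe, Multiset.cons_coe, Multiset.coe_sort,
        List.mergeSort_eq_insertionSort, List.insertionSort_cons_eq_take_drop]

lemma List.getElem?_cycleIcc_append_cons {α : Type*} {U : ℕ} (A B : List α) (x : α)
    (hU : (A ++ B).length < U) (j : Fin U) :
    (A ++ x :: B)[(Fin.cycleIcc ⟨A.length, by simp at hU; omega⟩ ⟨(A ++ B).length, hU⟩ j : ℕ)]?
      = if (j : ℕ) = (A ++ B).length then some x else (A ++ B)[(j : ℕ)]? := by
  have : NeZero U := ⟨by omega⟩
  have hlen : (A ++ B).length = A.length + B.length := List.length_append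
  rcases lt_or_ge (j : ℕ) A.length with hA | hA
  · rw [Fin.cycleIcc_of_lt (Fin.lt_def.mpr hA), if_neg (by omega),
      List.getElem?_append_left hA, List.getElem?_append_left hA]
  rcases lt_trichotomy (j : ℕ) (A ++ B).length with hm | hm | hm
  · rw [Fin.cycleIcc_of_ge_of_lt (Fin.le_def.mpr hA) (Fin.lt_def.mpr hm), if_neg (by omega),
      Fin.val_add_one_of_lt' (by omega),
      List.getElem?_append_right (by omega), List.getElem?_append_right hA,
      Nat.sub_add_comm hA, List.getElem?_cons_succ]
  · have hj : j = ⟨(A ++ B).length, hU⟩ := Fin.ext hm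
    rw [hj, Fin.cycleIcc_of_last (Fin.le_def.mpr (by simp)), if_pos rfl]
    simp
  · rw [Fin.cycleIcc_of_gt (Fin.lt_def.mpr hm), if_neg (by omega),
      List.getElem?_eq_none (by simp; omega), List.getElem?_eq_none (by simp; omega)]

section PrefixCounts

variable {M : ℕ}

-- Truncated: `prevIdx 0 = 0`, a value that `rangeOfPrefix` never reads.
def Fin.prevIdx (y : Fin M) : Fin M := ⟨y - 1, lt_of_le_of_lt (Nat.sub_le _ _) y.isLt⟩

def prefixCount (D : Multiset (Fin M)) (t : Fin M) : ℝ := ((D.filter (· ≤ t)).card : ℝ)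

def rangeOfPrefix (c : Fin M → ℝ) (p : {p : Fin M × Fin M // p.1 ≤ p.2}) : ℝ :=
  c p.1.2 - if (p.1.1 : ℕ) = 0 then 0 else c p.1.1.prevIdx

lemma rangeOfPrefix_prefixCount (D : Multiset (Fin M)) (p : {p : Fin M × Fin M // p.1 ≤ p.2}) :
    rangeOfPrefix (prefixCount D) p = range1Val D p := by
  obtain ⟨⟨y₁, y₂⟩, h₁₂⟩ := p
  have hsplit := Multiset.filter_add_not (y₁ ≤ ·) (D.filter (· ≤ y₂))
  rw [Multiset.filter_filter, Multiset.filter_filter] at hsplit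
  have hcard := congrArg (fun s => (Multiset.card s : ℝ)) hsplit
  simp only [Multiset.card_add, Nat.cast_add] at hcard
  simp only [rangeOfPrefix, prefixCount, range1Val, ← hcard]
  split_ifs with hy₁
  · have hnone : (D.filter fun x => ¬y₁ ≤ x ∧ x ≤ y₂) = 0 :=
      Multiset.filter_eq_nil.mpr fun x _ h => h.1 (Fin.le_def.mpr (by omega))
    rw [hnone, Multiset.card_zero, Nat.cast_zero, add_zero, sub_zero]
  · have hlow : (D.filter fun x => ¬y₁ ≤ x ∧ x ≤ y₂) = D.filter (· ≤ y₁.prevIdx) := by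
      refine Multiset.filter_congr fun x _ => ?_
      simp only [Fin.prevIdx, Fin.le_def, not_le] at h₁₂ ⊢
      omega
    rw [hlow, add_sub_cancel_right]

lemma abs_rangeOfPrefix_sub_le (o c : Fin M → ℝ) (p : {p : Fin M × Fin M // p.1 ≤ p.2}) :
    |rangeOfPrefix o p - rangeOfPrefix c p|
      ≤ |o p.1.2 - c p.1.2| + |o p.1.1.prevIdx - c p.1.1.prevIdx| := by
  unfold rangeOfPrefix
  split_ifs
  · simp only [sub_zero]
    exact le_add_of_nonneg_right (abs_nonneg _)
  · calc |o p.1.2 - o p.1.1.prevIdx - (c p.1.2 - c p.1.1.prevIdx)|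
        = |(o p.1.2 - c p.1.2) - (o p.1.1.prevIdx - c p.1.1.prevIdx)| := by ring_nf
      _ ≤ _ := abs_sub _ _

end PrefixCounts

section Encoding

variable {M U : ℕ}

def placementData (k : ℕ) (f : Fin U → Option (Fin M)) : Dataset M U :=
  fun t u => (if (t : ℕ) = 0 then k - 1 else 0) + if f u = some t then 1 else 0

lemma winCount_placementData (k : ℕ) (f : Fin U → Option (Fin M)) (t : Fin M) (u : Fin U) :
    winCount (placementData k f) 1 (t + 1) u = (k - 1) + if ∃ w ∈ f u, w ≤ t then 1 else 0 := by
  have hwin : ∀ t' : Fin M, 1 ≤ (t' : ℕ) + 1 ∧ (t' : ℕ) + 1 ≤ t + 1 ↔ t' ≤ t := fun t' => by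
    rw [Fin.le_def]; omega
  simp only [winCount, placementData, hwin, ← Finset.sum_filter, Finset.sum_add_distrib]
  have hzero :
      ((Finset.univ.filter (· ≤ t)).filter fun a : Fin M => (a : ℕ) = 0) = {⟨0, t.pos⟩} := by
    ext a
    simp only [Finset.mem_filter, Finset.mem_univ, true_and, Finset.mem_singleton, Fin.ext_iff,
      Fin.le_def]
    omega
  rw [hzero, Finset.sum_singleton]
  congr 1
  rcases f u with _ | w
  · simp
  · by_cases hw : w ≤ t <;> simp [Finset.filter_eq, hw]

lemma freqGe_placementData {k : ℕ} (hk : 0 < k) (f : Fin U → Option (Fin M)) (t : Fin M) :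
    freqGe k (placementData k f) 1 (t + 1) = #{u | ∃ w ∈ f u, w ≤ t} := by
  unfold freqGe
  congr 1
  ext u
  simp only [Finset.mem_filter, Finset.mem_univ, true_and, winCount_placementData]
  split_ifs with h <;> simp only [h, iff_true, iff_false] <;> omega

lemma EventNeighbor.symm {T U : ℕ} {S S' : Dataset T U} (h : EventNeighbor S S') :
    EventNeighbor S' S := by
  unfold EventNeighbor at h ⊢
  refine le_of_eq_of_le (Finset.sum_congr rfl fun t _ => Finset.sum_congr rfl fun u _ => ?_) h
  rw [← Int.natAbs_neg, neg_sub]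

lemma eventNeighbor_placementData (k : ℕ) {f g : Fin U → Option (Fin M)} (u₀ : Fin U)
    (hfg : ∀ u ≠ u₀, f u = g u) (hf : f u₀ = none) :
    EventNeighbor (placementData k f) (placementData k g) := by
  have hterm : ∀ t u, ((placementData k f t u : ℤ) - placementData k g t u).natAbs
      = if u = u₀ then (if g u₀ = some t then 1 else 0) else 0 := by
    intro t u
    by_cases hu : u = u₀
    · subst hu
      by_cases ht : g u = some t <;> simp [placementData, hf, ht]
    · simp [placementData, hfg u hu, hu]
  unfold EventNeighbor
  simp only [hterm, Finset.sum_ite_eq', Finset.mem_univ, if_true]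
  cases g u₀ <;> simp

end Encoding

section SortedData

variable {M U : ℕ}

def sortedData (k : ℕ) (D : Multiset (Fin M)) (σ : Equiv.Perm (Fin U)) : Dataset M U :=
  placementData k fun u => (D.sort (· ≤ ·))[(σ u : ℕ)]?

lemma cumVal_sortedData {k : ℕ} (hk : 0 < k) {D : Multiset (Fin M)} (hD : Multiset.card D ≤ U)
    (σ : Equiv.Perm (Fin U)) : cumVal k (sortedData k D σ) = prefixCount D := by
  funext t
  have hperm : #{u | ∃ w ∈ (D.sort (· ≤ ·))[(σ u : ℕ)]?, w ≤ t}
      = #{j : Fin U | ∃ w ∈ (D.sort (· ≤ ·))[(j : ℕ)]?, w ≤ t} :=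
    Finset.card_equiv σ (by simp)
  have hcount := List.card_filter_getElem?_eq_card_filter (U := U) (D.sort (· ≤ ·))
    (by rwa [Multiset.length_sort]) (· ≤ t)
  rw [Multiset.sort_eq] at hcount
  rw [cumVal, sortedData, freqGe_placementData hk, hperm, prefixCount]
  exact congrArg Nat.cast (by convert hcount)

end SortedData

section Coupling

variable {M U : ℕ}

lemma exists_perm_eventNeighbor_sortedData_cons (k : ℕ) {D : Multiset (Fin M)}
    (hD : Multiset.card D < U) (x : Fin M) :
    ∃ π : Equiv.Perm (Fin U), ∀ σ,
      EventNeighbor (sortedData k D σ) (sortedData k (x ::ₘ D) (π * σ)) := by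
  obtain ⟨A, B, hsort, hsort_cons⟩ := Multiset.exists_sort_eq_append_and_sort_cons_eq D x
  have hU : (A ++ B).length < U := by rwa [← hsort, Multiset.length_sort]
  refine ⟨Fin.cycleIcc ⟨A.length, by simp at hU; omega⟩ ⟨(A ++ B).length, hU⟩, fun σ => ?_⟩
  refine eventNeighbor_placementData k (σ⁻¹ ⟨(A ++ B).length, hU⟩) (fun u hu => ?_) ?_
  · have hσu : ((σ u : Fin U) : ℕ) ≠ (A ++ B).length := fun h =>
      hu (by rw [Equiv.Perm.eq_inv_iff_eq]; exact Fin.ext h)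
    simp only [hsort, hsort_cons, Equiv.Perm.mul_apply, List.getElem?_cycleIcc_append_cons,
      if_neg hσu]
  · simp [hsort]

lemma exists_perm_eventNeighbor_sortedData (k : ℕ) {D D' : Multiset (Fin M)}
    (hD : Multiset.card D ≤ U) (hD' : Multiset.card D' ≤ U) (h : AddRemoveNeighbor D D') :
    ∃ π : Equiv.Perm (Fin U), ∀ σ,
      EventNeighbor (sortedData k D σ) (sortedData k D' (π * σ)) := by
  obtain ⟨x, rfl | rfl⟩ := h
  · exact exists_perm_eventNeighbor_sortedData_cons k (by simpa using hD') x
  · obtain ⟨π, hπ⟩ := exists_perm_eventNeighbor_sortedData_cons k (D := D') (by simpa using hD) x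
    refine ⟨π⁻¹, fun σ => ?_⟩
    simpa using (hπ (π⁻¹ * σ)).symm

end Coupling

theorem range1d_from_cumulative_bundle_general (k M n U : ℕ)
    (hk : 0 < k) (hU : n ≤ U)
    (ε δ α β : ℝ)
    (hcum : ∃ M₁ : Dataset M U → PMF (Fin M → ℝ),
      IsDP EventNeighbor M₁ ε δ ∧ HasUtility M₁ (cumVal k) α (β / 2)) :
    ∃ M₂ : {D : Multiset (Fin M) // Multiset.card D ≤ n} →
        PMF ({p : Fin M × Fin M // p.1 ≤ p.2} → ℝ),
      IsDP (fun D D' => AddRemoveNeighbor D.1 D'.1) M₂ ε δ ∧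
      HasUtility M₂ (fun D => range1Val D.1) (2 * α) β := by
  obtain ⟨M₁, hDP, hUt⟩ := hcum
  refine ⟨fun D => (PMF.uniformOfFintype (Equiv.Perm (Fin U))).bind fun σ =>
      (M₁ (sortedData k D.1 σ)).map rangeOfPrefix, ?_, ?_⟩
  · exact hDP.bind_uniform _ _ fun D D' h =>
      exists_perm_eventNeighbor_sortedData k (D.2.trans hU) (D'.2.trans hU) h
  · intro D p
    refine PMF.le_toOuterMeasure_bind fun σ => ?_
    set S := sortedData k D.1 σ
    have hS : cumVal k S = prefixCount D.1 := cumVal_sortedData hk (D.2.trans hU) σ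
    calc ENNReal.ofReal (1 - β) = ENNReal.ofReal ((1 - β / 2) + (1 - β / 2) - 1) := by ring_nf
      _ ≤ (M₁ S).toOuterMeasure ({o | |o p.1.2 - cumVal k S p.1.2| ≤ α}
            ∩ {o | |o p.1.1.prevIdx - cumVal k S p.1.1.prevIdx| ≤ α}) :=
          (M₁ S).ofReal_add_sub_one_le_toOuterMeasure_inter (hUt S _) (hUt S _)
      _ ≤ _ := by
          rw [PMF.toOuterMeasure_map_apply]
          refine (M₁ S).toOuterMeasure.mono fun o ⟨h₂, h₁⟩ => ?_
          simp only [Set.mem_preimage, Set.mem_ofPred_eq, ← rangeOfPrefix_prefixCount, hS]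
            at h₁ h₂ ⊢
          linarith [abs_rangeOfPrefix_sub_le o (prefixCount D.1) p]

/-- an event-level DP algorithm for cumulative `freq≥k` in the
bundle setting (horizon `M`, universe of size `U ≥ n`) yields a DP algorithm
for 1d-range query with domain `{1,...,M}` on inputs of at most `n` points. -/
theorem range1d_from_cumulative_bundle (k M n U : ℕ)
    (hk : 0 < k) (hM : 0 < M) (hn : 0 < n) (hU : n ≤ U)
    (ε δ α β : ℝ) (hε : 0 ≤ ε) (hδ : 0 ≤ δ) (hα : 0 ≤ α) (hβ0 : 0 ≤ β) (hβ1 : β ≤ 1)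
    (hcum : ∃ M₁ : Dataset M U → PMF (Fin M → ℝ),
      IsDP EventNeighbor M₁ ε δ ∧ HasUtility M₁ (cumVal k) α (β / 2)) :
    ∃ M₂ : {D : Multiset (Fin M) // Multiset.card D ≤ n} →
        PMF ({p : Fin M × Fin M // p.1 ≤ p.2} → ℝ),
      IsDP (fun D D' => AddRemoveNeighbor D.1 D'.1) M₂ ε δ ∧
      HasUtility M₂ (fun D => range1Val D.1) (2 * α) β :=
  range1d_from_cumulative_bundle_general k M n U hk hU ε δ α β hcum
end

section
/- Fix positive integers k, W, T, U with W ≤ T and reals ε, δ, α ≥ 0, β ∈ [0,1]. If there exists an (ε/2, δ/2)-DP algorithm (under event-level neighbors) for fixed-window freq≥k with window W in the bundle setting on datasets with time horizon 2W over universe [U] having (α,β)-utility, then there exists an (ε,δ)-DP algorithm (under event-level neighbors) for fixed-window freq≥k with window W in the bundle setting on datasets with time horizon T over universe [U] having (α,β)-utility. -/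
open Finset

/-! Cut the horizon into blocks of length `W` and consider the overlapping segments formed by
two consecutive blocks. Every window of length `W` lies inside one of them, so running the
horizon-`2W` algorithm independently on every segment answers each query with the original
accuracy. An event-level change touches a single time step and hence at most two segments, and
basic composition of two `(ε/2, δ/2)`-DP runs is `(ε, δ)`-DP. -/

open scoped ENNReal

namespace PMF

variable {X Y : Type*}

/-- `IsDP nb M ε δ` says exactly that `M D` and `M D'` are indistinguishable with `c = exp ε`,
`d = δ` for all neighbors `D`, `D'`. -/
def Indistinguishable (p q : PMF X) (c d : ℝ≥0∞) : Prop :=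
  ∀ s : Set X, p.toOuterMeasure s ≤ c * q.toOuterMeasure s + d

theorem toOuterMeasure_apply_le_one (p : PMF X) (s : Set X) : p.toOuterMeasure s ≤ 1 :=
  (p.toOuterMeasure.mono (Set.subset_univ s)).trans_eq
    ((toOuterMeasure_apply_eq_one_iff p _).2 (Set.subset_univ _))

namespace Indistinguishable

variable {p q : PMF X} {c d : ℝ≥0∞}

theorem refl (p : PMF X) : Indistinguishable p p 1 0 := fun s => by simp

theorem mono (h : Indistinguishable p q c d) {c' d' : ℝ≥0∞} (hc : c ≤ c') (hd : d ≤ d') :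
    Indistinguishable p q c' d' :=
  fun s => (h s).trans (add_le_add (mul_le_mul_left hc _) hd)

theorem map (h : Indistinguishable p q c d) (f : X → Y) :
    Indistinguishable (p.map f) (q.map f) c d := fun s => by
  simpa only [toOuterMeasure_map_apply] using h (f ⁻¹' s)

/-- The hockey-stick divergence is attained on the set where `p` exceeds `c • q`. -/
theorem tsum_tsub_le (h : Indistinguishable p q c d) : ∑' x, (p x - c * q x) ≤ d := by
  set s := {x | c * q x < p x}
  have hsupp : ∀ x, p x - c * q x = s.indicator (fun x => p x - c * q x) x := fun x => by
    by_cases hx : x ∈ s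
    · rw [Set.indicator_of_mem hx]
    · rw [Set.indicator_of_notMem hx, tsub_eq_zero_of_le (not_lt.1 hx)]
  have hsplit : ∀ x, s.indicator (fun x => p x - c * q x) x + s.indicator (fun x => c * q x) x
      = s.indicator p x := fun x => by
    by_cases hx : x ∈ s
    · rw [Set.indicator_of_mem hx, Set.indicator_of_mem hx, Set.indicator_of_mem hx,
        tsub_add_cancel_of_le (le_of_lt hx)]
    · simp only [Set.indicator_of_notMem hx, add_zero]
  have hcq : c * q.toOuterMeasure s = ∑' x, s.indicator (fun x => c * q x) x := by
    rw [toOuterMeasure_apply, ← ENNReal.tsum_mul_left]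
    exact tsum_congr fun x => (Set.indicator_const_mul s q c x).symm
  have hcq_ne_top : ∑' x, s.indicator (fun x => c * q x) x ≠ ⊤ := by
    refine ne_top_of_le_ne_top (tsum_coe_indicator_ne_top p s) (ENNReal.tsum_le_tsum fun x => ?_)
    by_cases hx : x ∈ s
    · rw [Set.indicator_of_mem hx, Set.indicator_of_mem hx]; exact le_of_lt hx
    · rw [Set.indicator_of_notMem hx, Set.indicator_of_notMem hx]
  refine ENNReal.le_of_add_le_add_right hcq_ne_top ?_
  calc ∑' x, (p x - c * q x) + ∑' x, s.indicator (fun x => c * q x) x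
      = p.toOuterMeasure s := by
        rw [tsum_congr hsupp, ← ENNReal.tsum_add, tsum_congr hsplit, toOuterMeasure_apply]
    _ ≤ c * q.toOuterMeasure s + d := h s
    _ = d + ∑' x, s.indicator (fun x => c * q x) x := by rw [hcq, add_comm]

theorem tsum_mul_le (h : Indistinguishable p q c d) {g : X → ℝ≥0∞} (hg : ∀ x, g x ≤ 1) :
    ∑' x, p x * g x ≤ c * ∑' x, q x * g x + d := by
  have hpt : ∀ x, p x * g x ≤ c * (q x * g x) + (p x - c * q x) := fun x =>
    calc p x * g x ≤ (c * q x + (p x - c * q x)) * g x := mul_le_mul_left le_add_tsub _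
      _ = c * (q x * g x) + (p x - c * q x) * g x := by ring
      _ ≤ c * (q x * g x) + (p x - c * q x) := add_le_add_right (mul_le_of_le_one_right' (hg x)) _
  calc ∑' x, p x * g x ≤ ∑' x, (c * (q x * g x) + (p x - c * q x)) := ENNReal.tsum_le_tsum hpt
    _ = c * ∑' x, q x * g x + ∑' x, (p x - c * q x) := by
        rw [ENNReal.tsum_add, ENNReal.tsum_mul_left]
    _ ≤ c * ∑' x, q x * g x + d := add_le_add_right h.tsum_tsub_le _

theorem bind {f g : X → PMF Y} {c' d' : ℝ≥0∞} (h : Indistinguishable p q c d)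
    (hfg : ∀ x, Indistinguishable (f x) (g x) c' d') :
    Indistinguishable (p.bind f) (q.bind g) (c * c') (d + d') := fun s => by
  rw [toOuterMeasure_bind_apply, toOuterMeasure_bind_apply]
  -- Truncating at `1` makes the inner bound a test function for `tsum_mul_le`; this is what
  -- yields the additive loss `d + d'` rather than `d + c * d'`.
  set t : X → ℝ≥0∞ := fun x => min 1 (c' * (g x).toOuterMeasure s)
  have hft : ∀ x, (f x).toOuterMeasure s ≤ t x + d' := fun x =>
    calc (f x).toOuterMeasure s ≤ min 1 (c' * (g x).toOuterMeasure s + d') :=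
          le_min ((f x).toOuterMeasure_apply_le_one s) (hfg x s)
      _ ≤ min (1 + d') (c' * (g x).toOuterMeasure s + d') := min_le_min_right _ le_self_add
      _ = t x + d' := min_add_add_right _ _ _
  calc ∑' x, p x * (f x).toOuterMeasure s ≤ ∑' x, (p x * t x + p x * d') :=
        ENNReal.tsum_le_tsum fun x => (mul_le_mul_right (hft x) _).trans_eq (mul_add _ _ _)
    _ = ∑' x, p x * t x + d' := by
        rw [ENNReal.tsum_add, ENNReal.tsum_mul_right, tsum_coe, one_mul]
    _ ≤ c * ∑' x, q x * t x + d + d' :=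
        add_le_add_left (h.tsum_mul_le fun x => min_le_left _ _) _
    _ ≤ c * ∑' x, q x * (c' * (g x).toOuterMeasure s) + d + d' := by
        gcongr with x
        exact min_le_right _ _
    _ = c * c' * ∑' x, q x * (g x).toOuterMeasure s + (d + d') := by
        simp_rw [mul_left_comm (q _) c', ENNReal.tsum_mul_left]
        ring

end Indistinguishable

noncomputable def pi : {n : ℕ} → (Fin n → PMF X) → PMF (Fin n → X)
  | 0, _ => pure Fin.elim0
  | _ + 1, P => (P 0).bind fun x => (pi fun i => P i.succ).map (Fin.cons (α := fun _ => X) x)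

theorem pi_succ {n : ℕ} (P : Fin (n + 1) → PMF X) :
    pi P = (P 0).bind fun x => (pi fun i => P i.succ).map (Fin.cons (α := fun _ => X) x) :=
  rfl

theorem pi_map_eval {n : ℕ} (P : Fin n → PMF X) (j : Fin n) : (pi P).map (· j) = P j := by
  induction n with
  | zero => exact j.elim0
  | succ n ih =>
    rw [pi_succ, map_bind]
    cases j using Fin.cases with
    | zero =>
      have hx : ∀ x : X, (fun y : Fin (n + 1) → X => y 0) ∘ Fin.cons x
          = Function.const (Fin n → X) x :=
        fun x => funext fun _ => Fin.cons_zero _ _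
      simp only [map_comp, hx, map_const, bind_pure]
    | succ j =>
      have hx : ∀ x : X, (fun y : Fin (n + 1) → X => y j.succ) ∘ Fin.cons x
          = fun y => y j :=
        fun x => funext fun _ => Fin.cons_succ _ _ _
      simp only [map_comp, hx, ih, bind_const]

theorem Indistinguishable.pi {n : ℕ} {P Q : Fin n → PMF X} {c d : Fin n → ℝ≥0∞}
    (h : ∀ j, Indistinguishable (P j) (Q j) (c j) (d j)) :
    Indistinguishable (PMF.pi P) (PMF.pi Q) (∏ j, c j) (∑ j, d j) := by
  induction n with
  | zero =>
    rw [Subsingleton.elim P Q]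
    simpa using Indistinguishable.refl (PMF.pi Q)
  | succ n ih =>
    rw [pi_succ P, pi_succ Q, Fin.prod_univ_succ, Fin.sum_univ_succ]
    exact (h 0).bind fun x => (ih fun j => h j.succ).map _

open scoped Classical in
theorem Indistinguishable.pi_of_card_ne_le {n m : ℕ} {P Q : Fin n → PMF X} {c d : ℝ≥0∞}
    (hc : 1 ≤ c) (h : ∀ j, P j ≠ Q j → Indistinguishable (P j) (Q j) c d)
    (hm : #{j | P j ≠ Q j} ≤ m) :
    Indistinguishable (PMF.pi P) (PMF.pi Q) (c ^ m) (m * d) := by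
  have hj : ∀ j, Indistinguishable (P j) (Q j) (if P j = Q j then 1 else c)
      (if P j = Q j then 0 else d) := fun j => by
    split_ifs with hPQ
    · rw [hPQ]; exact .refl _
    · exact h j hPQ
  refine (Indistinguishable.pi hj).mono ?_ ?_
  · rw [prod_ite, prod_const_one, one_mul, prod_const]
    exact pow_le_pow_right₀ hc hm
  · rw [sum_ite, sum_const_zero, zero_add, sum_const, nsmul_eq_mul]
    gcongr

end PMF

section BlockMechanism

variable {I J Q Q' Y : Type} {n : ℕ}

noncomputable def blockMechanism (M : J → PMF (Q → Y)) (split : Fin n → I → J)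
    (blk : Q' → Fin n) (off : Q' → Q) (D : I) : PMF (Q' → Y) :=
  (PMF.pi fun j => M (split j D)).map fun x q => x (blk q) (off q)

variable {M : J → PMF (Q → Y)} {split : Fin n → I → J} {blk : Q' → Fin n} {off : Q' → Q}

theorem IsDP.blockMechanism [DecidableEq J] {nb : I → I → Prop} {nb' : J → J → Prop}
    {ε δ : ℝ} {m : ℕ}
    (hM : IsDP nb' M ε δ) (hε : 0 ≤ ε)
    (hnb : ∀ D D', nb D D' → ∀ j, nb' (split j D) (split j D'))
    (hcard : ∀ D D', nb D D' → #{j | split j D ≠ split j D'} ≤ m) :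
    IsDP nb (blockMechanism M split blk off) (m * ε) (m * δ) := by
  intro D D' hD
  have hc : 1 ≤ ENNReal.ofReal (Real.exp ε) := by
    simpa using ENNReal.ofReal_le_ofReal (Real.one_le_exp hε)
  classical
  have hdiff : #{j | M (split j D) ≠ M (split j D')} ≤ m :=
    (card_le_card fun j => by
      simpa only [mem_filter, mem_univ, true_and] using mt (congrArg M)).trans (hcard D D' hD)
  have := (PMF.Indistinguishable.pi_of_card_ne_le hc (fun j _ => hM _ _ (hnb D D' hD j))
    hdiff).map fun x q => x (blk q) (off q)
  rwa [Real.exp_nat_mul, ENNReal.ofReal_pow (Real.exp_nonneg _),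
    ENNReal.ofReal_mul (Nat.cast_nonneg _), ENNReal.ofReal_natCast]

theorem HasUtility.blockMechanism {val : J → Q → ℝ} {val' : I → Q' → ℝ} {α β : ℝ}
    {M : J → PMF (Q → ℝ)} (hM : HasUtility M val α β)
    (hval : ∀ D q, val' D q = val (split (blk q) D) (off q)) :
    HasUtility (blockMechanism M split blk off) val' α β := by
  intro D q
  rw [_root_.blockMechanism, PMF.toOuterMeasure_map_apply, hval]
  change _ ≤ (PMF.pi _).toOuterMeasure ((fun x => x (blk q)) ⁻¹'
    {y : Q → ℝ | |y (off q) - val (split (blk q) D) (off q)| ≤ α})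
  rw [← PMF.toOuterMeasure_map_apply, PMF.pi_map_eval]
  exact hM _ _

end BlockMechanism

namespace Dataset

variable {T U : ℕ}

def timeSlice (S : Dataset T U) (m : ℕ) : Fin U → ℕ :=
  if h : m < T then S ⟨m, h⟩ else 0

theorem timeSlice_val (S : Dataset T U) (t : Fin T) : timeSlice S t = S t :=
  dif_pos t.2

theorem timeSlice_of_le (S : Dataset T U) {m : ℕ} (h : T ≤ m) : timeSlice S m = 0 :=
  dif_neg (not_lt.2 h)

/-- The dataset read from time `a` on (0-indexed), cut or padded with empty steps to
horizon `T'`. -/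
def shift (S : Dataset T U) (a T' : ℕ) : Dataset T' U :=
  fun t => timeSlice S (a + t)

theorem timeSlice_shift (S : Dataset T U) (a : ℕ) {T' m : ℕ} (hm : m < T') :
    timeSlice (shift S a T') m = timeSlice S (a + m) :=
  dif_pos hm

theorem winCount_eq_sum_timeSlice (S : Dataset T U) (a w : ℕ) (u : Fin U) :
    winCount S (a + 1) (a + w) u = ∑ s ∈ range w, timeSlice S (a + s) u := by
  calc winCount S (a + 1) (a + w) u
      = ∑ m ∈ range T, if m ∈ Ico a (a + w) then timeSlice S m u else 0 := by
        rw [winCount, ← Fin.sum_univ_eq_sum_range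
          (fun m => if m ∈ Ico a (a + w) then timeSlice S m u else 0)]
        refine sum_congr rfl fun t _ => ?_
        simp only [mem_Ico, timeSlice_val]
        exact if_congr (by omega) rfl rfl
    _ = ∑ m ∈ Ico a (a + w), timeSlice S m u := by
        rw [sum_ite_mem]
        refine sum_subset inter_subset_right fun m hm hnot => ?_
        have hTm : T ≤ m := by simpa [hm] using hnot
        rw [timeSlice_of_le S hTm, Pi.zero_apply]
    _ = ∑ s ∈ range w, timeSlice S (a + s) u := by
        rw [sum_Ico_eq_sum_range, Nat.add_sub_cancel_left]

theorem freqGe_shift (k : ℕ) (S : Dataset T U) (a : ℕ) {T' r w : ℕ} (h : r + w ≤ T') :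
    freqGe k (shift S a T') (r + 1) (r + w) = freqGe k S (a + r + 1) (a + r + w) := by
  have hwin : ∀ u, winCount (shift S a T') (r + 1) (r + w) u
      = winCount S (a + r + 1) (a + r + w) u := fun u => by
    rw [winCount_eq_sum_timeSlice, winCount_eq_sum_timeSlice]
    refine sum_congr rfl fun s hs => ?_
    rw [timeSlice_shift S a (by simp only [mem_range] at hs; omega), add_assoc]
  simp only [freqGe, hwin]

theorem freqGe_eq_freqGe_shift_block (k : ℕ) {W : ℕ} (hW : 0 < W) (S : Dataset T U) (i : ℕ) :
    freqGe k S (i + 1) (i + W) =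
      freqGe k (shift S (i / W * W) (2 * W)) (i % W + 1) (i % W + W) := by
  rw [freqGe_shift k S _ (by have := Nat.mod_lt i hW; omega), Nat.div_add_mod']

def sliceDist (S S' : Dataset T U) (m : ℕ) : ℕ :=
  ∑ u, ((timeSlice S m u : ℤ) - timeSlice S' m u).natAbs

theorem sum_sliceDist (S S' : Dataset T U) :
    ∑ m ∈ range T, sliceDist S S' m =
      ∑ t : Fin T, ∑ u, ((S t u : ℤ) - S' t u).natAbs := by
  rw [← Fin.sum_univ_eq_sum_range]
  simp only [sliceDist, timeSlice_val]

theorem sliceDist_eq_zero_iff {S S' : Dataset T U} {m : ℕ} :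
    sliceDist S S' m = 0 ↔ timeSlice S m = timeSlice S' m := by
  simp [sliceDist, sum_eq_zero_iff, funext_iff, sub_eq_zero]

theorem lt_of_sliceDist_ne_zero {S S' : Dataset T U} {m : ℕ} (h : sliceDist S S' m ≠ 0) :
    m < T :=
  not_le.1 fun hm => h <| sliceDist_eq_zero_iff.2 <| by
    rw [timeSlice_of_le S hm, timeSlice_of_le S' hm]

theorem eventNeighbor_shift {S S' : Dataset T U} (h : EventNeighbor S S') (a T' : ℕ) :
    EventNeighbor (shift S a T') (shift S' a T') := by
  unfold EventNeighbor at h ⊢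
  rw [← sum_sliceDist] at h ⊢
  calc ∑ m ∈ range T', sliceDist (shift S a T') (shift S' a T') m
      = ∑ m ∈ range T', sliceDist S S' (a + m) := sum_congr rfl fun m hm => by
        simp only [sliceDist, timeSlice_shift _ a (mem_range.1 hm)]
    _ = ∑ m ∈ Ico a (a + T'), sliceDist S S' m := by
        rw [sum_Ico_eq_sum_range, Nat.add_sub_cancel_left]
    _ ≤ ∑ m ∈ range T, sliceDist S S' m :=
        sum_le_sum_of_ne_zero fun m _ hm => mem_range.2 (lt_of_sliceDist_ne_zero hm)
    _ ≤ 1 := h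

theorem _root_.EventNeighbor.exists_timeSlice_eq {S S' : Dataset T U} (h : EventNeighbor S S') :
    ∃ t₀, ∀ m ≠ t₀, timeSlice S m = timeSlice S' m := by
  by_contra! hne
  obtain ⟨m₁, -, h₁⟩ := hne 0
  obtain ⟨m₂, h₂₁, h₂⟩ := hne m₁
  replace h₁ := mt sliceDist_eq_zero_iff.1 h₁
  replace h₂ := mt sliceDist_eq_zero_iff.1 h₂
  unfold EventNeighbor at h
  rw [← sum_sliceDist] at h
  have : sliceDist S S' m₂ + sliceDist S S' m₁ ≤ 1 :=
    calc _ = ∑ m ∈ {m₂, m₁}, sliceDist S S' m := (sum_pair h₂₁).symm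
      _ ≤ ∑ m ∈ range T, sliceDist S S' m :=
        sum_le_sum_of_ne_zero fun m _ hm => mem_range.2 (lt_of_sliceDist_ne_zero hm)
      _ ≤ 1 := h
  omega

theorem card_shift_ne_le_two {S S' : Dataset T U} (h : EventNeighbor S S') {W : ℕ} (hW : 0 < W)
    (n : ℕ) : #{j : Fin n | shift S (j * W) (2 * W) ≠ shift S' (j * W) (2 * W)} ≤ 2 := by
  obtain ⟨t₀, ht₀⟩ := h.exists_timeSlice_eq
  have hblock : ∀ j : ℕ, shift S (j * W) (2 * W) ≠ shift S' (j * W) (2 * W) →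
      j = t₀ / W ∨ j = t₀ / W - 1 := fun j hj => by
    have hlo : j * W ≤ t₀ ∧ t₀ < j * W + 2 * W := by
      by_contra hout
      exact hj (funext fun t => ht₀ _ (by omega))
    have h₁ : j ≤ t₀ / W := (Nat.le_div_iff_mul_le hW).2 hlo.1
    have h₂ : t₀ / W < j + 2 := (Nat.div_lt_iff_lt_mul hW).2 (by rw [add_mul]; exact hlo.2)
    omega
  refine (card_le_card_of_injOn (fun j : Fin n => (j : ℕ)) (t := {t₀ / W, t₀ / W - 1})
    (fun j hj => ?_) Fin.val_injective.injOn).trans card_le_two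
  rw [coe_filter] at hj
  simpa using hblock j hj.2

end Dataset

theorem fixed_window_horizon_reduction_event_general (k W T U : ℕ)
    (hW : 0 < W)
    (ε δ α β : ℝ) (hε : 0 ≤ ε)
    (h : ∃ M₁ : Dataset (2 * W) U → PMF (Fin (2 * W - W + 1) → ℝ),
      IsDP EventNeighbor M₁ (ε / 2) (δ / 2) ∧ HasUtility M₁ (fwVal k W) α β) :
    ∃ M₂ : Dataset T U → PMF (Fin (T - W + 1) → ℝ),
      IsDP EventNeighbor M₂ ε δ ∧ HasUtility M₂ (fwVal k W) α β := by
  obtain ⟨M₁, hDP, hUt⟩ := h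
  let split : Fin ((T - W) / W + 1) → Dataset T U → Dataset (2 * W) U :=
    fun j S => S.shift (j * W) (2 * W)
  let blk : Fin (T - W + 1) → Fin ((T - W) / W + 1) :=
    fun i => ⟨i / W, Nat.lt_succ_of_le (Nat.div_le_div_right (Nat.le_of_lt_succ i.2))⟩
  let off : Fin (T - W + 1) → Fin (2 * W - W + 1) :=
    fun i => ⟨i % W, by have := Nat.mod_lt i hW; omega⟩
  refine ⟨blockMechanism M₁ split blk off, ?_, hUt.blockMechanism fun S i => by
    rw [fwVal, fwVal, Dataset.freqGe_eq_freqGe_shift_block k hW S i]⟩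
  have hDP₂ := hDP.blockMechanism (split := split) (blk := blk) (off := off) (by positivity)
    (fun S S' h j => Dataset.eventNeighbor_shift h _ _)
    (fun S S' h => Dataset.card_shift_ne_le_two h hW _)
  rwa [Nat.cast_two, mul_div_cancel₀ _ two_ne_zero, mul_div_cancel₀ _ two_ne_zero] at hDP₂

/-- time-horizon reduction for fixed-window `freq≥k` under
event-level DP in the bundle setting: an `(ε/2, δ/2)`-DP algorithm for horizon
`2W` yields an `(ε, δ)`-DP algorithm for horizon `T`. -/
theorem fixed_window_horizon_reduction_event (k W T U : ℕ)
    (hk : 0 < k) (hW : 0 < W) (hWT : W ≤ T) (hU : 0 < U)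
    (ε δ α β : ℝ) (hε : 0 ≤ ε) (hδ : 0 ≤ δ) (hα : 0 ≤ α) (hβ0 : 0 ≤ β) (hβ1 : β ≤ 1)
    (h : ∃ M₁ : Dataset (2 * W) U → PMF (Fin (2 * W - W + 1) → ℝ),
      IsDP EventNeighbor M₁ (ε / 2) (δ / 2) ∧ HasUtility M₁ (fwVal k W) α β) :
    ∃ M₂ : Dataset T U → PMF (Fin (T - W + 1) → ℝ),
      IsDP EventNeighbor M₂ ε δ ∧ HasUtility M₂ (fwVal k W) α β :=
  fixed_window_horizon_reduction_event_general k W T U hW ε δ α β hε h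
end

section
/- Fix positive integers k, T, U and reals ε, δ, α ≥ 0, β ∈ [0,1]. If there exists an (ε,δ)-DP algorithm (under event-level neighbors) for fixed-window freq≥k with window W = T in the bundle setting on datasets with time horizon 2T over universe [U] having (α,β)-utility, then there exists an (ε,δ)-DP algorithm (under event-level neighbors) for cumulative freq≥k in the bundle setting on datasets with time horizon T over universe [U] having (α,β)-utility. -/
open Finset

/-- an event-level DP algorithm for fixed-window `freq≥k` with
window `W = T` on horizon `2T` yields an event-level DP algorithm for
cumulative `freq≥k` on horizon `T` (bundle setting). -/
theorem cumulative_from_fixed_window (k T U : ℕ) (hk : 0 < k) (hT : 0 < T) (hU : 0 < U)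
    (ε δ α β : ℝ) (hε : 0 ≤ ε) (hδ : 0 ≤ δ) (hα : 0 ≤ α) (hβ0 : 0 ≤ β) (hβ1 : β ≤ 1)
    (h : ∃ M₁ : Dataset (2 * T) U → PMF (Fin (2 * T - T + 1) → ℝ),
      IsDP EventNeighbor M₁ ε δ ∧ HasUtility M₁ (fwVal k T) α β) :
    ∃ M₂ : Dataset T U → PMF (Fin T → ℝ),
      IsDP EventNeighbor M₂ ε δ ∧ HasUtility M₂ (cumVal k) α β := by
  obtain ⟨M₁, hDP, hUt⟩ := h
  -- the padded dataset: zeros in the first T steps, then S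
  set pad : Dataset T U → Dataset (2 * T) U := fun S t u =>
    if h : T ≤ (t : ℕ) then S ⟨(t : ℕ) - T, by have := t.isLt; omega⟩ u else 0 with hpad
  have sum_pad : ∀ {M : Type} [AddCommMonoid M] (f : Fin (2 * T) → M) (g : Fin T → M),
      (∀ t : Fin (2 * T), (t : ℕ) < T → f t = 0) →
      (∀ j : Fin T, f ⟨T + (j : ℕ), by have := j.isLt; omega⟩ = g j) →
      ∑ t, f t = ∑ j, g j := by
    intro M _ f g h0 h1
    rw [← Finset.sum_filter_add_sum_filter_not Finset.univ
      (fun t : Fin (2 * T) => T ≤ (t : ℕ)) f]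
    have h2 : ∑ t ∈ Finset.univ.filter (fun t : Fin (2 * T) => ¬ T ≤ (t : ℕ)), f t = 0 := by
      refine Finset.sum_eq_zero fun t ht => ?_
      simp only [Finset.mem_filter, not_le] at ht
      exact h0 t ht.2
    rw [h2, add_zero]
    refine Finset.sum_nbij' (i := fun t : Fin (2 * T) =>
        (⟨(t : ℕ) - T, by have := t.isLt; omega⟩ : Fin T))
      (j := fun j : Fin T => (⟨T + (j : ℕ), by have := j.isLt; omega⟩ : Fin (2 * T)))
      (fun a _ => Finset.mem_univ _) ?_ ?_ ?_ ?_
    · intro j _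
      simp
    · intro t ht
      simp only [Finset.mem_filter] at ht
      exact Fin.ext (by have := ht.2; simp; omega)
    · intro j _
      exact Fin.ext (by simp)
    · intro t ht
      simp only [Finset.mem_filter] at ht
      have := ht.2
      rw [← h1 ⟨(t : ℕ) - T, by have := t.isLt; omega⟩]
      congr 1
      exact Fin.ext (by simp; omega)
  -- winCount transfer
  have hwin : ∀ (S : Dataset T U) (t : Fin T) (u : Fin U),
      winCount (pad S) ((t : ℕ) + 2) (T + (t : ℕ) + 1) u = winCount S 1 ((t : ℕ) + 1) u := by
    intro S t u
    refine sum_pad _ _ ?_ ?_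
    · intro t' ht'
      split
      · simp [hpad, Nat.not_le_of_lt ht']
      · rfl
    · intro j
      have hj := j.isLt
      have ht := t.isLt
      simp only [hpad]
      rw [dif_pos (by simp)]
      have h3 : (⟨T + (j : ℕ) - T, by omega⟩ : Fin T) = j := Fin.ext (by simp)
      rw [h3]
      by_cases hc : (j : ℕ) + 1 ≤ (t : ℕ) + 1
      · rw [if_pos (by omega), if_pos (by omega)]
      · rw [if_neg (by omega), if_neg (by omega)]
  -- freq transfer
  have hfreq : ∀ (S : Dataset T U) (t : Fin T),
      freqGe k (pad S) ((t : ℕ) + 2) (T + (t : ℕ) + 1) = freqGe k S 1 ((t : ℕ) + 1) := by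
    intro S t
    unfold freqGe
    congr 1
    apply Finset.filter_congr
    intro u _
    rw [hwin]
  -- event-neighbor transfer
  have hnb : ∀ S S' : Dataset T U, EventNeighbor S S' → EventNeighbor (pad S) (pad S') := by
    intro S S' hSS'
    unfold EventNeighbor at *
    have : (∑ t : Fin (2 * T), ∑ u : Fin U, ((pad S t u : ℤ) - (pad S' t u : ℤ)).natAbs)
        = ∑ t : Fin T, ∑ u : Fin U, ((S t u : ℤ) - (S' t u : ℤ)).natAbs := by
      refine sum_pad _ _ ?_ ?_
      · intro t' ht'
        refine Finset.sum_eq_zero fun u _ => ?_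
        simp [hpad, Nat.not_le_of_lt ht']
      · intro j
        refine Finset.sum_congr rfl fun u _ => ?_
        simp only [hpad]
        rw [dif_pos (by simp)]
        simp only [Nat.add_sub_cancel_left, Fin.eta]
        rw [dif_pos (by omega)]
    rw [this]
    exact hSS'
  -- index map : Fin T → Fin (2*T - T + 1)
  have hidx : ∀ t : Fin T, (t : ℕ) + 1 < 2 * T - T + 1 := by
    intro t; have := t.isLt; omega
  set G : (Fin (2 * T - T + 1) → ℝ) → (Fin T → ℝ) :=
    fun o t => o ⟨(t : ℕ) + 1, hidx t⟩ with hG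
  refine ⟨fun S => (M₁ (pad S)).map G, ?_, ?_⟩
  · intro D D' hDD' s
    rw [PMF.toOuterMeasure_map_apply, PMF.toOuterMeasure_map_apply]
    exact hDP _ _ (hnb _ _ hDD') _
  · intro S t
    rw [PMF.toOuterMeasure_map_apply]
    have hval : fwVal k T (pad S) ⟨(t : ℕ) + 1, hidx t⟩ = cumVal k S t := by
      unfold fwVal cumVal
      have : (t : ℕ) + 1 + T = T + (t : ℕ) + 1 := by omega
      rw [this]
      have : (t : ℕ) + 1 + 1 = (t : ℕ) + 2 := by omega
      rw [this, hfreq]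
    have hset : G ⁻¹' {o | |o t - cumVal k S t| ≤ α}
        = {o | |o ⟨(t : ℕ) + 1, hidx t⟩ - fwVal k T (pad S) ⟨(t : ℕ) + 1, hidx t⟩| ≤ α} := by
      ext o
      simp [hG, hval]
    rw [hset]
    exact hUt (pad S) ⟨(t : ℕ) + 1, hidx t⟩
end

section
/- Fix positive integers d, m, a matrix A ∈ {0,1}^{d×m}, and set k = W = d + 2, T = 2W, U = m. Fix reals ε, δ, α ≥ 0, β ∈ [0,1]. If there exists an (ε,δ)-DP algorithm (under event-level neighbors) for fixed-window freq≥k with window W in the bundle setting on datasets with time horizon T over universe [U] having (α,β)-utility, then there exists an (ε,δ)-DP algorithm for the A-linear query problem having (α,β)-utility. -/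
open Finset

/-!
Encode `x` as a dataset over `2(d + 2)` time steps in which item `u` carries the bits
`A₀ᵤ, …, A_{d-1}ᵤ`, then `xᵤ`, then a padding count `d + A₀ᵤ - Σⱼ Aⱼᵤ`, then `A₁ᵤ, A₂ᵤ, …`.
Sliding the window by one step drops `Aᵢᵤ` and picks up `A_{i+1}ᵤ`, so the `i`-th window
holds `d + xᵤ + Aᵢᵤ` copies of `u`, which reaches `k = d + 2` exactly when `Aᵢᵤ = xᵤ = 1`:
the `i`-th fixed-window query is `(Ax)ᵢ`. Flipping one coordinate of `x` changes a single
multiplicity by one, so the encoding maps neighbors to event-level neighbors, and both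
privacy and utility pass through pre-composition with the encoding and restriction of the
answers to the first `d` windows.
-/

section Reduction

variable {I₁ I₂ O₁ O₂ Q₁ Q₂ : Type}

theorem IsDP.comp_map {N₁ : I₁ → I₁ → Prop} {N₂ : I₂ → I₂ → Prop} {M : I₁ → PMF O₁}
    {ε δ : ℝ} (hM : IsDP N₁ M ε δ) {f : I₂ → I₁} (hf : ∀ x x', N₂ x x' → N₁ (f x) (f x'))
    (g : O₁ → O₂) : IsDP N₂ (fun x => (M (f x)).map g) ε δ := by
  intro x x' hx s
  simp only [PMF.toOuterMeasure_map_apply]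
  exact hM _ _ (hf x x' hx) _

theorem HasUtility.comp_map {M : I₁ → PMF (Q₁ → ℝ)} {val₁ : I₁ → Q₁ → ℝ}
    {val₂ : I₂ → Q₂ → ℝ} {α β : ℝ} (hM : HasUtility M val₁ α β) {f : I₂ → I₁} {g : Q₂ → Q₁}
    (hval : ∀ x q, val₂ x q = val₁ (f x) (g q)) :
    HasUtility (fun x => (M (f x)).map fun o q => o (g q)) val₂ α β := by
  intro x q
  rw [PMF.toOuterMeasure_map_apply]
  simpa only [Set.preimage_ofPred_eq, hval] using hM (f x) (g q)

end Reduction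

theorem EventNeighbor.of_eq_off {T U : ℕ} {S S' : Dataset T U} (t₀ : Fin T) (u₀ : Fin U)
    (hS : ∀ t u, (t, u) ≠ (t₀, u₀) → S t u = S' t u)
    (h₀ : ((S t₀ u₀ : ℤ) - S' t₀ u₀).natAbs ≤ 1) : EventNeighbor S S' := by
  unfold EventNeighbor
  rw [← Fintype.sum_prod_type', sum_eq_single (t₀, u₀) (fun p _ hp => by simp [hS _ _ hp])
    (by simp)]
  exact h₀

theorem winCount_eq_sum_range {T U : ℕ} (S : Dataset T U) (u : Fin U) {f : ℕ → ℕ}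
    (hf : ∀ t : Fin T, S t u = f t) {i W : ℕ} (hiW : i + W ≤ T) :
    winCount S (i + 1) (i + W) u = ∑ k ∈ range W, f (i + k) := by
  have hwin : (range T).filter (fun t => i + 1 ≤ t + 1 ∧ t + 1 ≤ i + W)
      = Ico i (i + W) := by
    ext t
    simp only [mem_filter, mem_range, mem_Ico]
    omega
  simp only [winCount, hf]
  rw [Fin.sum_univ_eq_sum_range (fun t => if i + 1 ≤ t + 1 ∧ t + 1 ≤ i + W then f t else 0),
    ← sum_filter, hwin, sum_Ico_eq_sum_range, Nat.add_sub_cancel_left]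

theorem sum_range_slide {M : Type*} [AddCommMonoid M] (f : ℕ → M) (i n : ℕ) :
    ∑ k ∈ range n, f (i + 1 + k) + f i = ∑ k ∈ range n, f (i + k) + f (i + n) := by
  have h₁ := sum_range_succ' (fun k => f (i + k)) n
  have h₂ := sum_range_succ (fun k => f (i + k)) n
  simp only [add_zero, ← add_assoc, add_right_comm i _ 1] at h₁
  rw [← h₁, h₂]

/-- The padding at time `d + 1` is chosen so that the first window holds exactly
`d + c + b 0`. -/
def slidingEncoding (d : ℕ) (b : ℕ → ℕ) (c t : ℕ) : ℕ :=
  if t < d then b t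
  else if t = d then c
  else if t = d + 1 then d + b 0 - ∑ j ∈ range d, b j
  else b (t - (d + 1))

theorem slidingEncoding_window {d : ℕ} {b : ℕ → ℕ} (hb : ∀ j < d, b j ≤ 1) (c : ℕ) {i : ℕ}
    (hi : i < d) : ∑ k ∈ range (d + 2), slidingEncoding d b c (i + k) = d + c + b i := by
  induction i with
  | zero =>
    have hsum : ∑ j ∈ range d, b j ≤ d :=
      (sum_le_sum fun j hj => hb j (mem_range.mp hj)).trans (by simp)
    have hhead : ∑ k ∈ range d, slidingEncoding d b c k = ∑ j ∈ range d, b j :=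
      sum_congr rfl fun k hk => if_pos (mem_range.mp hk)
    have hc : slidingEncoding d b c d = c := by simp [slidingEncoding]
    have hpad : slidingEncoding d b c (d + 1) = d + b 0 - ∑ j ∈ range d, b j := by
      simp [slidingEncoding]
    simp only [zero_add, sum_range_succ, hhead, hc, hpad]
    omega
  | succ i ih =>
    have hslide := sum_range_slide (slidingEncoding d b c) i (d + 2)
    have hdrop : slidingEncoding d b c i = b i := if_pos (by omega)
    have hadd : slidingEncoding d b c (i + (d + 2)) = b (i + 1) := by
      simp only [slidingEncoding]
      rw [if_neg (by omega), if_neg (by omega), if_neg (by omega)]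
      congr 1
      omega
    rw [hdrop, hadd, ih (by omega)] at hslide
    omega

def linQueryDataset {d m : ℕ} (A : Fin d → Fin m → Bool) (x : Fin m → Bool) :
    Dataset (2 * (d + 2)) m :=
  fun t u => slidingEncoding d (fun j => if h : j < d then (A ⟨j, h⟩ u).toNat else 0) (x u).toNat t

theorem freqGe_linQueryDataset {d m : ℕ} (A : Fin d → Fin m → Bool) (x : Fin m → Bool)
    (i : Fin d) :
    freqGe (d + 2) (linQueryDataset A x) (i + 1) (i + (d + 2))
      = ∑ u, if A i u && x u then 1 else 0 := by
  rw [freqGe, card_filter]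
  refine sum_congr rfl fun u _ => ?_
  have hbits : ∀ j < d, (if h : j < d then (A ⟨j, h⟩ u).toNat else 0) ≤ 1 := fun j hj => by
    simp only [hj, dif_pos, Bool.toNat_le]
  rw [winCount_eq_sum_range _ u (fun t => rfl) (by omega),
    slidingEncoding_window hbits _ i.2, dif_pos i.2]
  cases A i u <;> cases x u <;> simp

theorem eventNeighbor_linQueryDataset {d m : ℕ} (A : Fin d → Fin m → Bool)
    {x x' : Fin m → Bool} (hx : CoordNeighbor x x') :
    EventNeighbor (linQueryDataset A x) (linQueryDataset A x') := by
  obtain ⟨u₀, hu₀⟩ := hx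
  refine EventNeighbor.of_eq_off ⟨d, by omega⟩ u₀ (fun t u htu => ?_) ?_
  · by_cases hu : u = u₀
    · have ht : (t : ℕ) ≠ d := fun ht => htu (Prod.ext (Fin.ext ht) hu)
      simp [linQueryDataset, slidingEncoding, ht]
    · simp [linQueryDataset, hu₀ u hu]
  · cases hxu : x u₀ <;> cases hxu' : x' u₀ <;> simp [linQueryDataset, slidingEncoding, hxu, hxu']

theorem linear_query_from_fixed_window_bundle_general (d m : ℕ)
    (A : Fin d → Fin m → Bool)
    (ε δ α β : ℝ)
    (h : ∃ M₁ : Dataset (2 * (d + 2)) m → PMF (Fin (2 * (d + 2) - (d + 2) + 1) → ℝ),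
      IsDP EventNeighbor M₁ ε δ ∧ HasUtility M₁ (fwVal (d + 2) (d + 2)) α β) :
    ∃ M₂ : (Fin m → Bool) → PMF (Fin d → ℝ),
      IsDP CoordNeighbor M₂ ε δ ∧ HasUtility M₂ (linVal A) α β := by
  obtain ⟨M₁, hDP, hU⟩ := h
  have hd : d ≤ 2 * (d + 2) - (d + 2) + 1 := by omega
  refine ⟨fun x => (M₁ (linQueryDataset A x)).map fun o i => o (Fin.castLE hd i), ?_, ?_⟩
  · exact hDP.comp_map (f := linQueryDataset A) (fun _ _ => eventNeighbor_linQueryDataset A) _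
  · refine hU.comp_map (f := linQueryDataset A) (g := Fin.castLE hd) fun x i => ?_
    rw [linVal, fwVal, Fin.val_castLE, freqGe_linQueryDataset]

/-- with `k = W = d + 2`, `T = 2W`, `U = m`, an event-level DP
algorithm for fixed-window `freq≥k` in the bundle setting yields a DP algorithm
for the `A`-linear query problem with the same utility. -/
theorem linear_query_from_fixed_window_bundle (d m : ℕ) (hd : 0 < d) (hm : 0 < m)
    (A : Fin d → Fin m → Bool)
    (ε δ α β : ℝ) (hε : 0 ≤ ε) (hδ : 0 ≤ δ) (hα : 0 ≤ α) (hβ0 : 0 ≤ β) (hβ1 : β ≤ 1)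
    (h : ∃ M₁ : Dataset (2 * (d + 2)) m → PMF (Fin (2 * (d + 2) - (d + 2) + 1) → ℝ),
      IsDP EventNeighbor M₁ ε δ ∧ HasUtility M₁ (fwVal (d + 2) (d + 2)) α β) :
    ∃ M₂ : (Fin m → Bool) → PMF (Fin d → ℝ),
      IsDP CoordNeighbor M₂ ε δ ∧ HasUtility M₂ (linVal A) α β :=
  linear_query_from_fixed_window_bundle_general d m A ε δ α β h
end

section
/- Fix positive integers d, m, a matrix A ∈ {0,1}^{d×m}, and set k = d + 2, W = 4dm + 1, T = 2W, U = m. Fix reals ε, δ, α ≥ 0, β ∈ [0,1]. If there exists an (ε,δ)-DP algorithm (under event-level neighbors) for fixed-window freq≥k with window W in the singleton setting on datasets with time horizon T over universe [U] having (α,β)-utility, then there exists an (ε,δ)-DP algorithm for the A-linear query problem having (α,β)-utility. -/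
open Finset

-- ===== auxiliary arithmetic lemmas =====
lemma LQ_mlt {m p q u v : ℕ} (hu : u < m) (h : p < q) : m*p + u < m*q + v := by
  have h1 : m*(p+1) ≤ m*q := Nat.mul_le_mul_left m h
  have h2 : m*(p+1) = m*p + m := by ring
  omega

lemma LQ_mlt1 {m p q u : ℕ} (hm : 0 < m) (h : p + 2 ≤ q) : m*p + 1 < m*q + u := by
  have h1 : m*(p+2) ≤ m*q := Nat.mul_le_mul_left m h
  have h2 : m*(p+2) = m*p + (m + m) := by ring
  omega

lemma LQ_mcancel {m e e' u : ℕ} (hm : 0 < m) (h : m*e + u = m*e' + u) : e = e' :=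
  Nat.eq_of_mul_eq_mul_left hm (by omega)

lemma LQ_timeOK (d m : ℕ) (hd : 0 < d) (hm : 0 < m) {e u : ℕ} (hu : u < m)
    (h1 : 1 ≤ e) (h2 : e < 8*d) :
    1 ≤ m*e + u ∧ m*e + u ≤ 2*(4*d*m+1) := by
  have a1 : 0 < m*e := Nat.mul_pos hm h1
  have a2 : m*e + u < m*(8*d) + 0 := LQ_mlt hu h2
  have a3 : m*(8*d) = 2*(4*d*m) := by ring
  omega

-- ===== summation lemmas =====
lemma LQ_sum_hit (T c t₁ t₂ : ℕ) (hc1 : 1 ≤ c) (hcT : c ≤ T) :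
    (∑ t : Fin T, if t₁ ≤ (t:ℕ)+1 ∧ (t:ℕ)+1 ≤ t₂ then (if (t:ℕ)+1 = c then (1:ℕ) else 0) else 0)
      = if t₁ ≤ c ∧ c ≤ t₂ then 1 else 0 := by
  have hlt : c - 1 < T := by omega
  have h0 : ∀ b ∈ (Finset.univ : Finset (Fin T)), b ≠ (⟨c-1, hlt⟩ : Fin T) →
      (if t₁ ≤ (b:ℕ)+1 ∧ (b:ℕ)+1 ≤ t₂ then (if (b:ℕ)+1 = c then (1:ℕ) else 0) else 0) = 0 := by
    intro b _ hb
    have hbc : (b:ℕ)+1 ≠ c := by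
      intro e
      exact hb (Fin.ext (show (b:ℕ) = c - 1 by omega))
    simp [hbc]
  have h1 : (⟨c-1, hlt⟩ : Fin T) ∉ (Finset.univ : Finset (Fin T)) →
      (if t₁ ≤ ((⟨c-1, hlt⟩ : Fin T):ℕ)+1 ∧ ((⟨c-1, hlt⟩ : Fin T):ℕ)+1 ≤ t₂
        then (if ((⟨c-1, hlt⟩ : Fin T):ℕ)+1 = c then (1:ℕ) else 0) else 0) = 0 :=
    fun hmem => absurd (Finset.mem_univ _) hmem
  rw [Finset.sum_eq_single _ h0 h1]
  have hv : ((⟨c-1, hlt⟩ : Fin T) : ℕ) + 1 = c := by show c - 1 + 1 = c; omega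
  rw [hv]
  by_cases h : t₁ ≤ c ∧ c ≤ t₂ <;> simp [h]

lemma LQ_sum_hit_le (T c : ℕ) :
    (∑ t : Fin T, if (t:ℕ)+1 = c then (1:ℕ) else 0) ≤ 1 := by
  by_cases h : ∃ t : Fin T, (t:ℕ)+1 = c
  · obtain ⟨t₀, ht₀⟩ := h
    have h0 : ∀ b ∈ (Finset.univ : Finset (Fin T)), b ≠ t₀ →
        (if (b:ℕ)+1 = c then (1:ℕ) else 0) = 0 := by
      intro b _ hb
      have : (b:ℕ)+1 ≠ c := by
        intro e
        exact hb (Fin.ext (by omega))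
      simp [this]
    rw [Finset.sum_eq_single _ h0 (fun hm => absurd (Finset.mem_univ _) hm)]
    split_ifs <;> omega
  · push_neg at h
    rw [Finset.sum_eq_zero (fun t _ => by simp [h t])]
    omega

lemma LQ_sum_if_inj {n : ℕ} (f : Fin n → ℕ) (hf : Function.Injective f) (c : ℕ) :
    (∑ i : Fin n, if c = f i then (1:ℕ) else 0) = if (∃ i, c = f i) then 1 else 0 := by
  by_cases h : ∃ i, c = f i
  · obtain ⟨i₀, hi₀⟩ := h
    have h0 : ∀ b ∈ (Finset.univ : Finset (Fin n)), b ≠ i₀ →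
        (if c = f b then (1:ℕ) else 0) = 0 := by
      intro b _ hb
      have : c ≠ f b := fun e => hb (hf (e.symm.trans hi₀))
      simp [this]
    rw [Finset.sum_eq_single _ h0 (fun hm => absurd (Finset.mem_univ _) hm),
      if_pos hi₀, if_pos ⟨i₀, hi₀⟩]
  · rw [if_neg h, Finset.sum_eq_zero]
    intro i _
    exact if_neg (fun e => h ⟨i, e⟩)

lemma LQ_sum_range_ge (n a : ℕ) :
    (∑ i ∈ Finset.range n, if a ≤ i then (1:ℕ) else 0) = n - a := by
  induction n with
  | zero => simp
  | succ n ih =>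
    rw [Finset.sum_range_succ, ih]
    split_ifs with h <;> omega

lemma LQ_sum_range_lt (n a : ℕ) (h : a ≤ n) :
    (∑ i ∈ Finset.range n, if i < a then (1:ℕ) else 0) = a := by
  have h1 := LQ_sum_range_ge n a
  have h2 : (∑ i ∈ Finset.range n, if i < a then (1:ℕ) else 0)
      + (∑ i ∈ Finset.range n, if a ≤ i then (1:ℕ) else 0)
      = ∑ i ∈ Finset.range n, 1 := by
    rw [← Finset.sum_add_distrib]
    exact Finset.sum_congr rfl (fun i _ => by split_ifs <;> omega)
  rw [Finset.sum_const, Finset.card_range, smul_eq_mul, mul_one] at h2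
  omega
-- ===== the encoding =====
def sTime (d m : ℕ) (A : Fin d → Fin m → Bool) (i : Fin d) (u : Fin m) : ℕ :=
  if A i u then m*(4*(d-1+(i:ℕ))+2) + (u:ℕ) else m*(4*(d+(i:ℕ))+3) + (u:ℕ)

def enc1 (d m : ℕ) : Dataset (2*(4*d*m+1)) m :=
  fun t u => ∑ i : Fin d, if (t:ℕ)+1 = m*(4*(i:ℕ)+3)+(u:ℕ) then 1 else 0

def enc2 (d m : ℕ) (A : Fin d → Fin m → Bool) : Dataset (2*(4*d*m+1)) m :=
  fun t u => ∑ i : Fin d, if (t:ℕ)+1 = sTime d m A i u then 1 else 0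

def enc3 (d m : ℕ) (x : Fin m → Bool) : Dataset (2*(4*d*m+1)) m :=
  fun t u => if x u = true ∧ (t:ℕ)+1 = m*(4*(d-1)+1)+(u:ℕ) then 1 else 0

def enc (d m : ℕ) (A : Fin d → Fin m → Bool) (x : Fin m → Bool) : Dataset (2*(4*d*m+1)) m :=
  fun t u => enc1 d m t u + enc2 d m A t u + enc3 d m x t u

-- ===== window count computations =====
lemma LQ_wc1 (d m : ℕ) (hd : 0 < d) (hm : 0 < m) (j : Fin d) (u : Fin m) :
    winCount (enc1 d m) (m*(4*(j:ℕ))+1) (m*(4*(j:ℕ)+4*d)+1) u = d - (j:ℕ) := by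
  have hjd := j.isLt
  have hum := u.isLt
  unfold winCount enc1
  have step : ∀ t : Fin (2*(4*d*m+1)),
      (if m*(4*(j:ℕ))+1 ≤ (t:ℕ)+1 ∧ (t:ℕ)+1 ≤ m*(4*(j:ℕ)+4*d)+1
        then (∑ i : Fin d, if (t:ℕ)+1 = m*(4*(i:ℕ)+3)+(u:ℕ) then 1 else 0) else 0)
      = ∑ i : Fin d, (if m*(4*(j:ℕ))+1 ≤ (t:ℕ)+1 ∧ (t:ℕ)+1 ≤ m*(4*(j:ℕ)+4*d)+1
        then (if (t:ℕ)+1 = m*(4*(i:ℕ)+3)+(u:ℕ) then (1:ℕ) else 0) else 0) := by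
    intro t; split_ifs <;> simp
  rw [Finset.sum_congr rfl (fun t _ => step t), Finset.sum_comm]
  have per : ∀ i : Fin d,
      (∑ t : Fin (2*(4*d*m+1)), if m*(4*(j:ℕ))+1 ≤ (t:ℕ)+1 ∧ (t:ℕ)+1 ≤ m*(4*(j:ℕ)+4*d)+1
        then (if (t:ℕ)+1 = m*(4*(i:ℕ)+3)+(u:ℕ) then (1:ℕ) else 0) else 0)
      = if (j:ℕ) ≤ (i:ℕ) then 1 else 0 := by
    intro i
    have hid := i.isLt
    have hOK := LQ_timeOK d m hd hm hum (show 1 ≤ 4*(i:ℕ)+3 by omega) (show 4*(i:ℕ)+3 < 8*d by omega)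
    rw [LQ_sum_hit _ _ _ _ hOK.1 hOK.2]
    by_cases hji : (j:ℕ) ≤ (i:ℕ)
    · have hl : m*(4*(j:ℕ)) + 0 < m*(4*(i:ℕ)+3) + (u:ℕ) := LQ_mlt hm (by omega)
      have hr : m*(4*(i:ℕ)+3) + (u:ℕ) < m*(4*(j:ℕ)+4*d) + 1 := LQ_mlt hum (by omega)
      rw [if_pos ⟨by omega, by omega⟩, if_pos hji]
    · have h1 : m*(4*(i:ℕ)+3)+(u:ℕ) < m*(4*(j:ℕ)) + 1 := LQ_mlt hum (by omega)
      rw [if_neg (by omega), if_neg hji]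
  rw [Finset.sum_congr rfl (fun i _ => per i),
    Fin.sum_univ_eq_sum_range (fun k => if (j:ℕ) ≤ k then (1:ℕ) else 0) d]
  exact LQ_sum_range_ge d (j:ℕ)

lemma LQ_wc2 (d m : ℕ) (hd : 0 < d) (hm : 0 < m) (A : Fin d → Fin m → Bool)
    (j : Fin d) (u : Fin m) :
    winCount (enc2 d m A) (m*(4*(j:ℕ))+1) (m*(4*(j:ℕ)+4*d)+1) u
      = (j:ℕ) + (if A j u = true then 1 else 0) := by
  have hjd := j.isLt
  have hum := u.isLt
  unfold winCount enc2
  have step : ∀ t : Fin (2*(4*d*m+1)),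
      (if m*(4*(j:ℕ))+1 ≤ (t:ℕ)+1 ∧ (t:ℕ)+1 ≤ m*(4*(j:ℕ)+4*d)+1
        then (∑ i : Fin d, if (t:ℕ)+1 = sTime d m A i u then 1 else 0) else 0)
      = ∑ i : Fin d, (if m*(4*(j:ℕ))+1 ≤ (t:ℕ)+1 ∧ (t:ℕ)+1 ≤ m*(4*(j:ℕ)+4*d)+1
        then (if (t:ℕ)+1 = sTime d m A i u then (1:ℕ) else 0) else 0) := by
    intro t; split_ifs <;> simp
  rw [Finset.sum_congr rfl (fun t _ => step t), Finset.sum_comm]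
  have per : ∀ i : Fin d,
      (∑ t : Fin (2*(4*d*m+1)), if m*(4*(j:ℕ))+1 ≤ (t:ℕ)+1 ∧ (t:ℕ)+1 ≤ m*(4*(j:ℕ)+4*d)+1
        then (if (t:ℕ)+1 = sTime d m A i u then (1:ℕ) else 0) else 0)
      = (if (i:ℕ) < (j:ℕ) then 1 else 0) + (if (i:ℕ) = (j:ℕ) ∧ A i u = true then 1 else 0) := by
    intro i
    have hid := i.isLt
    by_cases hA : A i u = true
    · have hst : sTime d m A i u = m*(4*(d-1+(i:ℕ))+2)+(u:ℕ) := by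
        unfold sTime; rw [if_pos hA]
      rw [hst]
      have hOK := LQ_timeOK d m hd hm hum (show 1 ≤ 4*(d-1+(i:ℕ))+2 by omega)
        (show 4*(d-1+(i:ℕ))+2 < 8*d by omega)
      rw [LQ_sum_hit _ _ _ _ hOK.1 hOK.2]
      by_cases hij : (i:ℕ) ≤ (j:ℕ)
      · have hl : m*(4*(j:ℕ)) + 0 < m*(4*(d-1+(i:ℕ))+2) + (u:ℕ) := LQ_mlt hm (by omega)
        have hr : m*(4*(d-1+(i:ℕ))+2) + (u:ℕ) < m*(4*(j:ℕ)+4*d) + 1 := LQ_mlt hum (by omega)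
        rw [if_pos ⟨by omega, by omega⟩]
        by_cases he : (i:ℕ) = (j:ℕ)
        · rw [if_neg (by omega), if_pos ⟨he, hA⟩]
        · rw [if_pos (by omega), if_neg (fun hp => he hp.1)]
      · have hbad : m*(4*(j:ℕ)+4*d) + 1 < m*(4*(d-1+(i:ℕ))+2) + (u:ℕ) :=
          LQ_mlt1 hm (by omega)
        rw [if_neg (by omega), if_neg (by omega), if_neg (fun hp => hij (by omega))]
    · have hst : sTime d m A i u = m*(4*(d+(i:ℕ))+3)+(u:ℕ) := by
        unfold sTime; rw [if_neg hA]
      rw [hst]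
      have hOK := LQ_timeOK d m hd hm hum (show 1 ≤ 4*(d+(i:ℕ))+3 by omega)
        (show 4*(d+(i:ℕ))+3 < 8*d by omega)
      rw [LQ_sum_hit _ _ _ _ hOK.1 hOK.2]
      by_cases hij : (i:ℕ) < (j:ℕ)
      · have hl : m*(4*(j:ℕ)) + 0 < m*(4*(d+(i:ℕ))+3) + (u:ℕ) := LQ_mlt hm (by omega)
        have hr : m*(4*(d+(i:ℕ))+3) + (u:ℕ) < m*(4*(j:ℕ)+4*d) + 1 := LQ_mlt hum (by omega)
        rw [if_pos ⟨by omega, by omega⟩, if_pos hij, if_neg (fun hp => hA hp.2)]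
      · have hbad : m*(4*(j:ℕ)+4*d) + 1 < m*(4*(d+(i:ℕ))+3) + (u:ℕ) :=
          LQ_mlt1 hm (by omega)
        rw [if_neg (by omega), if_neg hij, if_neg (fun hp => hA hp.2)]
  rw [Finset.sum_congr rfl (fun i _ => per i), Finset.sum_add_distrib]
  have e1 : (∑ i : Fin d, if (i:ℕ) < (j:ℕ) then (1:ℕ) else 0) = (j:ℕ) := by
    rw [Fin.sum_univ_eq_sum_range (fun k => if k < (j:ℕ) then (1:ℕ) else 0) d]
    exact LQ_sum_range_lt d (j:ℕ) (by omega)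
  have e2 : (∑ i : Fin d, if (i:ℕ) = (j:ℕ) ∧ A i u = true then (1:ℕ) else 0)
      = if A j u = true then 1 else 0 := by
    have h0 : ∀ b ∈ (Finset.univ : Finset (Fin d)), b ≠ j →
        (if (b:ℕ) = (j:ℕ) ∧ A b u = true then (1:ℕ) else 0) = 0 := by
      intro b _ hb
      exact if_neg (fun hp => hb (Fin.ext hp.1))
    rw [Finset.sum_eq_single _ h0 (fun hm => absurd (Finset.mem_univ _) hm)]
    by_cases hA : A j u = true <;> simp [hA]
  rw [e1, e2]

lemma LQ_wc3 (d m : ℕ) (hd : 0 < d) (hm : 0 < m) (x : Fin m → Bool)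
    (j : Fin d) (u : Fin m) :
    winCount (enc3 d m x) (m*(4*(j:ℕ))+1) (m*(4*(j:ℕ)+4*d)+1) u
      = if x u = true then 1 else 0 := by
  have hjd := j.isLt
  have hum := u.isLt
  unfold winCount enc3
  by_cases hx : x u = true
  · simp only [hx, true_and]
    have hOK := LQ_timeOK d m hd hm hum (show 1 ≤ 4*(d-1)+1 by omega)
      (show 4*(d-1)+1 < 8*d by omega)
    rw [LQ_sum_hit _ _ _ _ hOK.1 hOK.2]
    have hl : m*(4*(j:ℕ)) + 0 < m*(4*(d-1)+1) + (u:ℕ) := LQ_mlt hm (by omega)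
    have hr : m*(4*(d-1)+1) + (u:ℕ) < m*(4*(j:ℕ)+4*d) + 1 := LQ_mlt hum (by omega)
    rw [if_pos ⟨by omega, by omega⟩]; simp
  · rw [Finset.sum_eq_zero (fun t _ => by simp [hx]), if_neg hx]

lemma LQ_wc_split {T U : ℕ} (S₁ S₂ : Dataset T U) (t₁ t₂ : ℕ) (u : Fin U) :
    winCount (fun t u => S₁ t u + S₂ t u) t₁ t₂ u
      = winCount S₁ t₁ t₂ u + winCount S₂ t₁ t₂ u := by
  unfold winCount
  rw [← Finset.sum_add_distrib]
  exact Finset.sum_congr rfl (fun t _ => by split_ifs <;> simp)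

lemma LQ_winCount_enc (d m : ℕ) (hd : 0 < d) (hm : 0 < m) (A : Fin d → Fin m → Bool)
    (x : Fin m → Bool) (j : Fin d) (u : Fin m) :
    winCount (enc d m A x) (m*(4*(j:ℕ))+1) (m*(4*(j:ℕ)) + (4*d*m+1)) u
      = d + (if A j u = true then 1 else 0) + (if x u = true then 1 else 0) := by
  have hB : m*(4*(j:ℕ)) + (4*d*m+1) = m*(4*(j:ℕ)+4*d)+1 := by ring
  rw [hB]
  have hsplit : winCount (enc d m A x) (m*(4*(j:ℕ))+1) (m*(4*(j:ℕ)+4*d)+1) u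
      = winCount (fun t u => enc1 d m t u + enc2 d m A t u) (m*(4*(j:ℕ))+1) (m*(4*(j:ℕ)+4*d)+1) u
        + winCount (enc3 d m x) (m*(4*(j:ℕ))+1) (m*(4*(j:ℕ)+4*d)+1) u :=
    LQ_wc_split (fun t u => enc1 d m t u + enc2 d m A t u) (enc3 d m x) _ _ u
  rw [hsplit, LQ_wc_split (enc1 d m) (enc2 d m A) _ _ u,
    LQ_wc1 d m hd hm j u, LQ_wc2 d m hd hm A j u, LQ_wc3 d m hd hm x j u]
  have := j.isLt
  split_ifs <;> omega

lemma LQ_freq_enc (d m : ℕ) (hd : 0 < d) (hm : 0 < m) (A : Fin d → Fin m → Bool)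
    (x : Fin m → Bool) (j : Fin d) :
    freqGe (d+2) (enc d m A x) (m*(4*(j:ℕ))+1) (m*(4*(j:ℕ)) + (4*d*m+1))
      = ∑ u : Fin m, if A j u && x u then 1 else 0 := by
  unfold freqGe
  rw [Finset.card_filter]
  refine Finset.sum_congr rfl (fun u _ => ?_)
  rw [LQ_winCount_enc d m hd hm A x j u]
  have hcond : (d+2 ≤ d + (if A j u = true then 1 else 0) + (if x u = true then 1 else 0))
      ↔ ((A j u && x u) = true) := by
    by_cases hA : A j u = true <;> by_cases hx : x u = true <;> simp [hA, hx] <;> omega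
  rw [if_congr hcond rfl rfl]

-- ===== singleton property =====
lemma LQ_pfx_inj (d m : ℕ) (hm : 0 < m) (u : Fin m) :
    Function.Injective (fun i : Fin d => m*(4*(i:ℕ)+3)+(u:ℕ)) := by
  intro a b h
  have := LQ_mcancel hm h
  exact Fin.ext (by omega)

lemma LQ_sTime_inj (d m : ℕ) (hm : 0 < m) (A : Fin d → Fin m → Bool) (u : Fin m) :
    Function.Injective (fun i : Fin d => sTime d m A i u) := by
  intro a b h
  simp only [sTime] at h
  have had := a.isLt
  have hbd := b.isLt
  by_cases hA : A a u = true <;> by_cases hB : A b u = true <;>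
    simp only [hA, hB, if_true, if_false] at h <;>
    · have := LQ_mcancel hm h
      exact Fin.ext (by omega)

lemma LQ_hit_mod (d m : ℕ) (hm : 0 < m) (A : Fin d → Fin m → Bool) (x : Fin m → Bool)
    (t : Fin (2*(4*d*m+1))) (u : Fin m) (h : enc d m A x t u ≠ 0) :
    (u:ℕ) = ((t:ℕ)+1) % m := by
  have hum := u.isLt
  have key : ∃ e : ℕ, (t:ℕ)+1 = m*e + (u:ℕ) := by
    by_contra hno
    push_neg at hno
    apply h
    unfold enc enc1 enc2 enc3
    have z1 : (∑ i : Fin d, if (t:ℕ)+1 = m*(4*(i:ℕ)+3)+(u:ℕ) then (1:ℕ) else 0) = 0 :=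
      Finset.sum_eq_zero (fun i _ => if_neg (fun e => hno _ e))
    have z2 : (∑ i : Fin d, if (t:ℕ)+1 = sTime d m A i u then (1:ℕ) else 0) = 0 := by
      refine Finset.sum_eq_zero (fun i _ => if_neg (fun e => ?_))
      unfold sTime at e
      by_cases hA : A i u = true
      · rw [if_pos hA] at e; exact hno _ e
      · rw [if_neg hA] at e; exact hno _ e
    have z3 : (if x u = true ∧ (t:ℕ)+1 = m*(4*(d-1)+1)+(u:ℕ) then (1:ℕ) else 0) = 0 :=
      if_neg (fun hp => hno _ hp.2)
    rw [z1, z2, z3]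
  obtain ⟨e, he⟩ := key
  rw [he, Nat.mul_add_mod, Nat.mod_eq_of_lt hum]

lemma LQ_enc_le_one (d m : ℕ) (hd : 0 < d) (hm : 0 < m) (A : Fin d → Fin m → Bool)
    (x : Fin m → Bool) (t : Fin (2*(4*d*m+1))) (u : Fin m) :
    enc d m A x t u ≤ 1 := by
  unfold enc enc1 enc2 enc3
  rw [LQ_sum_if_inj _ (LQ_pfx_inj d m hm u) ((t:ℕ)+1),
    LQ_sum_if_inj _ (LQ_sTime_inj d m hm A u) ((t:ℕ)+1)]
  have X12 : ¬((∃ i : Fin d, (t:ℕ)+1 = m*(4*(i:ℕ)+3)+(u:ℕ))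
      ∧ (∃ i : Fin d, (t:ℕ)+1 = sTime d m A i u)) := by
    rintro ⟨⟨a, ha⟩, ⟨b, hb⟩⟩
    have had := a.isLt
    have hbd := b.isLt
    have heq := ha.symm.trans hb
    unfold sTime at heq
    by_cases hB : A b u = true
    · rw [if_pos hB] at heq
      have := LQ_mcancel hm heq; omega
    · rw [if_neg hB] at heq
      have := LQ_mcancel hm heq; omega
  have X13 : ¬((∃ i : Fin d, (t:ℕ)+1 = m*(4*(i:ℕ)+3)+(u:ℕ))
      ∧ (x u = true ∧ (t:ℕ)+1 = m*(4*(d-1)+1)+(u:ℕ))) := by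
    rintro ⟨⟨a, ha⟩, ⟨-, hx3⟩⟩
    have had := a.isLt
    have heq := ha.symm.trans hx3
    have := LQ_mcancel hm heq; omega
  have X23 : ¬((∃ i : Fin d, (t:ℕ)+1 = sTime d m A i u)
      ∧ (x u = true ∧ (t:ℕ)+1 = m*(4*(d-1)+1)+(u:ℕ))) := by
    rintro ⟨⟨b, hb⟩, ⟨-, hx3⟩⟩
    have hbd := b.isLt
    have heq := hb.symm.trans hx3
    unfold sTime at heq
    by_cases hB : A b u = true
    · rw [if_pos hB] at heq
      have := LQ_mcancel hm heq; omega
    · rw [if_neg hB] at heq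
      have := LQ_mcancel hm heq; omega
  by_cases h1 : ∃ i : Fin d, (t:ℕ)+1 = m*(4*(i:ℕ)+3)+(u:ℕ)
  · rw [if_pos h1, if_neg (fun hp => X12 ⟨h1, hp⟩), if_neg (fun hp => X13 ⟨h1, hp⟩)]
  · rw [if_neg h1]
    by_cases h2 : ∃ i : Fin d, (t:ℕ)+1 = sTime d m A i u
    · rw [if_pos h2, if_neg (fun hp => X23 ⟨h2, hp⟩)]
    · rw [if_neg h2]
      split_ifs <;> omega

lemma LQ_enc_singleton (d m : ℕ) (hd : 0 < d) (hm : 0 < m) (A : Fin d → Fin m → Bool)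
    (x : Fin m → Bool) : IsSingleton (enc d m A x) := by
  intro t
  by_cases hex : ∃ u : Fin m, enc d m A x t u ≠ 0
  · obtain ⟨u₀, hu₀⟩ := hex
    have h0 : ∀ b ∈ (Finset.univ : Finset (Fin m)), b ≠ u₀ → enc d m A x t b = 0 := by
      intro b _ hb
      by_contra hnb
      exact hb (Fin.ext ((LQ_hit_mod d m hm A x t b hnb).trans
        (LQ_hit_mod d m hm A x t u₀ hu₀).symm))
    rw [Finset.sum_eq_single _ h0 (fun hmem => absurd (Finset.mem_univ _) hmem)]
    exact LQ_enc_le_one d m hd hm A x t u₀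
  · push_neg at hex
    rw [Finset.sum_eq_zero (fun u _ => hex u)]
    omega

-- ===== event-level neighborliness =====
lemma LQ_enc_neighbor (d m : ℕ) (A : Fin d → Fin m → Bool) {x x' : Fin m → Bool}
    (h : CoordNeighbor x x') :
    EventNeighbor (enc d m A x) (enc d m A x') := by
  obtain ⟨u₀, hu⟩ := h
  unfold EventNeighbor
  have key : ∀ (t : Fin (2*(4*d*m+1))) (u : Fin m),
      ((enc d m A x t u : ℤ) - (enc d m A x' t u : ℤ)).natAbs
        ≤ if u = u₀ ∧ (t:ℕ)+1 = m*(4*(d-1)+1)+(u₀:ℕ) then 1 else 0 := by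
    intro t u
    by_cases he : u = u₀
    · subst he
      by_cases hc : (t:ℕ)+1 = m*(4*(d-1)+1)+(u:ℕ)
      · rw [if_pos ⟨rfl, hc⟩]
        have hE : enc d m A x t u = enc1 d m t u + enc2 d m A t u + enc3 d m x t u := rfl
        have hE' : enc d m A x' t u = enc1 d m t u + enc2 d m A t u + enc3 d m x' t u := rfl
        have b1 : enc3 d m x t u ≤ 1 := by unfold enc3; split_ifs <;> omega
        have b2 : enc3 d m x' t u ≤ 1 := by unfold enc3; split_ifs <;> omega
        rw [hE, hE']
        omega
      · rw [if_neg (fun hp => hc hp.2)]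
        have : enc d m A x t u = enc d m A x' t u := by
          unfold enc enc3
          rw [if_neg (fun hp => hc hp.2), if_neg (fun hp => hc hp.2)]
        rw [this]
        simp
    · rw [if_neg (fun hp => he hp.1)]
      have : enc d m A x t u = enc d m A x' t u := by
        unfold enc enc3
        rw [hu u he]
      rw [this]
      simp
  calc (∑ t : Fin (2*(4*d*m+1)), ∑ u : Fin m,
          ((enc d m A x t u : ℤ) - (enc d m A x' t u : ℤ)).natAbs)
      ≤ ∑ t : Fin (2*(4*d*m+1)), ∑ u : Fin m,
          (if u = u₀ ∧ (t:ℕ)+1 = m*(4*(d-1)+1)+(u₀:ℕ) then 1 else 0) :=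
        Finset.sum_le_sum (fun t _ => Finset.sum_le_sum (fun u _ => key t u))
    _ = ∑ t : Fin (2*(4*d*m+1)), (if (t:ℕ)+1 = m*(4*(d-1)+1)+(u₀:ℕ) then 1 else 0) := by
        refine Finset.sum_congr rfl (fun t _ => ?_)
        have h0 : ∀ b ∈ (Finset.univ : Finset (Fin m)), b ≠ u₀ →
            (if b = u₀ ∧ (t:ℕ)+1 = m*(4*(d-1)+1)+(u₀:ℕ) then (1:ℕ) else 0) = 0 :=
          fun b _ hb => if_neg (fun hp => hb hp.1)
        rw [Finset.sum_eq_single _ h0 (fun hmem => absurd (Finset.mem_univ _) hmem)]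
        by_cases hc : (t:ℕ)+1 = m*(4*(d-1)+1)+(u₀:ℕ) <;> simp [hc]
    _ ≤ 1 := LQ_sum_hit_le _ _

def LQ_idx (d m : ℕ) (hm : 0 < m) (j : Fin d) :
    Fin (2*(4*d*m+1) - (4*d*m+1) + 1) :=
  ⟨m*(4*(j:ℕ)), by
    have h1 : m*(4*(j:ℕ)) + 0 < m*(4*d) + 0 := LQ_mlt hm (by have := j.isLt; omega)
    have h2 : m*(4*d) = 4*d*m := by ring
    omega⟩

lemma LQ_dp_map {I I' O O' : Type} (n : I → I → Prop) (n' : I' → I' → Prop) (g : I' → I)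
    (hg : ∀ a b, n' a b → n (g a) (g b)) (f : O → O') (M : I → PMF O) (ε δ : ℝ)
    (h : IsDP n M ε δ) : IsDP n' (fun x => (M (g x)).map f) ε δ := by
  intro x x' hn s
  rw [PMF.toOuterMeasure_map_apply, PMF.toOuterMeasure_map_apply]
  exact h _ _ (hg _ _ hn) _

lemma LQ_util_map {I I' : Type} {Q Q' : Type} (g : I' → I) (φ : Q' → Q)
    (M : I → PMF (Q → ℝ)) (val : I → Q → ℝ) (val' : I' → Q' → ℝ) (α β : ℝ)
    (hv : ∀ x q, val (g x) (φ q) = val' x q)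
    (h : HasUtility M val α β) :
    HasUtility (fun x => (M (g x)).map (fun o q => o (φ q))) val' α β := by
  intro x q
  rw [PMF.toOuterMeasure_map_apply]
  have hset : ((fun (o : Q → ℝ) (q' : Q') => o (φ q')) ⁻¹' {o : Q' → ℝ | |o q - val' x q| ≤ α})
      = {o : Q → ℝ | |o (φ q) - val (g x) (φ q)| ≤ α} := by
    ext o
    simp only [Set.mem_preimage, Set.mem_setOf_eq]
    rw [hv x q]
  rw [hset]
  exact h (g x) (φ q)

-- ===== the main theorem =====
set_option maxHeartbeats 1000000 in
/-- with `k = d + 2`, `W = 4dm + 1`, `T = 2W`, `U = m`, an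
event-level DP algorithm for fixed-window `freq≥k` in the singleton setting
yields a DP algorithm for the `A`-linear query problem with the same utility. -/
theorem linear_query_from_fixed_window_singleton (d m : ℕ) (hd : 0 < d) (hm : 0 < m)
    (A : Fin d → Fin m → Bool)
    (ε δ α β : ℝ) (hε : 0 ≤ ε) (hδ : 0 ≤ δ) (hα : 0 ≤ α) (hβ0 : 0 ≤ β) (hβ1 : β ≤ 1)
    (h : ∃ M₁ : {S : Dataset (2 * (4 * d * m + 1)) m // IsSingleton S} →
        PMF (Fin (2 * (4 * d * m + 1) - (4 * d * m + 1) + 1) → ℝ),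
      IsDP (fun S S' => EventNeighbor S.1 S'.1) M₁ ε δ ∧
      HasUtility M₁ (fun S => fwVal (d + 2) (4 * d * m + 1) S.1) α β) :
    ∃ M₂ : (Fin m → Bool) → PMF (Fin d → ℝ),
      IsDP CoordNeighbor M₂ ε δ ∧ HasUtility M₂ (linVal A) α β := by
  obtain ⟨M₁, hDP, hU⟩ := h
  have hval : ∀ (x : Fin m → Bool) (j : Fin d),
      fwVal (d+2) (4*d*m+1) (enc d m A x) (LQ_idx d m hm j) = linVal A x j := by
    intro x j
    show ((freqGe (d+2) (enc d m A x) (m*(4*(j:ℕ))+1) (m*(4*(j:ℕ)) + (4*d*m+1)) : ℕ) : ℝ)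
      = linVal A x j
    unfold linVal
    exact_mod_cast congrArg (Nat.cast (R := ℝ)) (LQ_freq_enc d m hd hm A x j)
  refine ⟨fun x => (M₁ ⟨enc d m A x, LQ_enc_singleton d m hd hm A x⟩).map
      (fun o j => o (LQ_idx d m hm j)), ?_, ?_⟩
  · exact LQ_dp_map (I := {S : Dataset (2 * (4 * d * m + 1)) m // IsSingleton S})
      (I' := Fin m → Bool)
      (fun S S' => EventNeighbor S.1 S'.1) CoordNeighbor
      (fun x => ⟨enc d m A x, LQ_enc_singleton d m hd hm A x⟩)
      (fun a b hab => LQ_enc_neighbor d m A hab) _ M₁ ε δ hDP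
  · exact LQ_util_map (I := {S : Dataset (2 * (4 * d * m + 1)) m // IsSingleton S})
      (I' := Fin m → Bool)
      (Q := Fin (2 * (4 * d * m + 1) - (4 * d * m + 1) + 1)) (Q' := Fin d)
      (fun x => ⟨enc d m A x, LQ_enc_singleton d m hd hm A x⟩)
      (LQ_idx d m hm) M₁ (fun S => fwVal (d + 2) (4 * d * m + 1) S.1) (linVal A) α β
      (fun x j => hval x j) hU
end

section
/- Fix positive integers k, T, W, d, n with T ≥ W·d, set U = n, and fix reals ε, δ, α ≥ 0, β ∈ [0,1]. If there exists an (ε,δ)-DP algorithm (under item-level neighbors) for fixed-window freq≥k with window W in the bundle setting on datasets with time horizon T over universe [U] having (α,β)-utility, then there exists an (ε,δ)-DP algorithm for the 1-way marginal problem of dimension d on inputs of at most n vectors having (α,β)-utility. -/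
open Finset

/-! ### Auxiliary development for the reduction -/

namespace Marg

open scoped ENNReal

abbrev V (d : ℕ) := Fin d → Bool

/-- The multiset contribution of one slot. -/
def opt {d : ℕ} (a : Option (V d)) : Multiset (V d) := a.elim 0 fun v => {v}

/-- The multiset represented by an arrangement `g : Fin n → Option (V d)`. -/
def toMS {d n : ℕ} (g : Fin n → Option (V d)) : Multiset (V d) :=
  ∑ u : Fin n, opt (g u)

lemma toMS_update {d n : ℕ} (g : Fin n → Option (V d)) (s : Fin n) (a : Option (V d)) :
    toMS (Function.update g s a) + opt (g s) = toMS g + opt a := by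
  classical
  unfold toMS
  have hpt : ∀ u : Fin n, opt (Function.update g s a u)
      = Function.update (fun u => opt (g u)) s (opt a) u := fun u => by
    rcases eq_or_ne u s with rfl | h
    · simp
    · simp [Function.update_of_ne h]
  simp only [hpt]
  rw [Finset.sum_update_of_mem (Finset.mem_univ s)]
  conv_rhs => rw [← Finset.add_sum_erase _ (fun u => opt (g u)) (Finset.mem_univ s)]
  rw [Finset.erase_eq]
  abel

lemma toMS_update_some {d n : ℕ} {g : Fin n → Option (V d)} {s : Fin n}
    (hs : g s = none) (x : V d) :
    toMS (Function.update g s (some x)) = x ::ₘ toMS g := by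
  have h := toMS_update g s (some x)
  rw [hs] at h
  simp only [opt, Option.elim] at h
  rw [add_zero] at h
  rw [← Multiset.singleton_add, add_comm]
  exact h

lemma toMS_update_none {d n : ℕ} {g : Fin n → Option (V d)} {s : Fin n} {x : V d}
    (hs : g s = some x) :
    x ::ₘ toMS (Function.update g s none) = toMS g := by
  have h := toMS_update g s none
  rw [hs] at h
  simp only [opt, Option.elim] at h
  rw [add_zero] at h
  rw [← Multiset.singleton_add, add_comm]
  exact h

lemma count_toMS {d n : ℕ} (g : Fin n → Option (V d)) (x : V d) [DecidablePred fun u : Fin n => g u = some x] :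
    Multiset.count x (toMS g) = (Finset.univ.filter fun u : Fin n => g u = some x).card := by
  classical
  unfold toMS
  rw [Multiset.count_sum', Finset.card_filter]
  refine Finset.sum_congr rfl fun u _ => ?_
  by_cases hgx : g u = some x
  · rw [if_pos hgx, hgx]
    simp [opt]
  · rw [if_neg hgx]
    rw [Multiset.count_eq_zero]
    cases hgu : g u with
    | none => simp [opt]
    | some v =>
      rw [hgu] at hgx
      simp only [opt, Option.elim, Multiset.mem_singleton]
      intro hxx
      exact hgx (by rw [hxx])

lemma card_toMS {d n : ℕ} (g : Fin n → Option (V d)) :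
    Multiset.card (toMS g) = (Finset.univ.filter fun u : Fin n => (g u).isSome).card := by
  classical
  have hhom : Multiset.card (toMS g) = ∑ u : Fin n, Multiset.card (opt (g u)) :=
    map_sum (⟨⟨Multiset.card, Multiset.card_zero⟩, Multiset.card_add⟩ :
      Multiset (V d) →+ ℕ) (fun u => opt (g u)) Finset.univ
  rw [hhom, Finset.card_filter]
  refine Finset.sum_congr rfl fun u _ => ?_
  cases hgu : g u with
  | none => simp [opt]
  | some v => simp [opt]

lemma card_none_filter {d n : ℕ} (g : Fin n → Option (V d)) :
    (Finset.univ.filter fun u : Fin n => g u = none).card = n - Multiset.card (toMS g) := by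
  classical
  have h := Finset.card_filter_add_card_filter_not
    (s := (Finset.univ : Finset (Fin n))) (p := fun u => (g u).isSome)
  have hcongr : (Finset.univ.filter fun u : Fin n => ¬ (g u).isSome)
      = (Finset.univ.filter fun u : Fin n => g u = none) := by
    refine Finset.filter_congr fun u _ => ?_
    simp [Option.not_isSome_iff_eq_none]
  rw [hcongr] at h
  rw [card_toMS]
  have hn : (Finset.univ : Finset (Fin n)).card = n := by simp
  omega

lemma exists_toMS {d n : ℕ} :
    ∀ (D : Multiset (V d)), Multiset.card D ≤ n →
      ∃ g : Fin n → Option (V d), toMS g = D := by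
  classical
  refine fun D => Multiset.induction_on D (fun _ => ⟨fun _ => none, by simp [toMS, opt]⟩) ?_
  intro x D IH hcard
  rw [Multiset.card_cons] at hcard
  obtain ⟨g, hg⟩ := IH (by omega)
  have hnone : (Finset.univ.filter fun u : Fin n => g u = none).Nonempty := by
    rw [← Finset.card_pos, card_none_filter, hg]
    omega
  obtain ⟨s, hs⟩ := hnone
  exact ⟨Function.update g s (some x), by
    rw [toMS_update_some (Finset.mem_filter.1 hs).2 x, hg]⟩

/-- Encoding an arrangement as a dataset: item `u` gets `k` copies at
(0-indexed) time `j*W` exactly when its vector has coordinate `j` true. -/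
def enc (k W T : ℕ) {d n : ℕ} (g : Fin n → Option (V d)) : Dataset T n :=
  fun t u => (g u).elim 0 fun v =>
    if ∃ j : Fin d, (t : ℕ) = (j : ℕ) * W ∧ v j = true then k else 0

lemma enc_neighbor (k W T : ℕ) {d n : ℕ} (g : Fin n → Option (V d)) (s : Fin n)
    (a : Option (V d)) :
    ItemNeighbor (enc k W T g) (enc k W T (Function.update g s a)) :=
  ⟨s, fun u' hu' t => by simp [enc, Function.update_of_ne hu']⟩

lemma winCount_enc {k W T d n : ℕ} (hW : 0 < W) (g : Fin n → Option (V d)) (j : Fin d)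
    (hjT : ((j : ℕ) + 1) * W ≤ T) (u : Fin n) :
    winCount (enc k W T g) ((j : ℕ) * W + 1) ((j : ℕ) * W + W) u
      = (g u).elim 0 fun v => if v j then k else 0 := by
  have hjW : (j : ℕ) * W + W ≤ T := by rw [add_mul, one_mul] at hjT; exact hjT
  have ht0 : (j : ℕ) * W < T := by omega
  unfold winCount
  rw [Finset.sum_eq_single (⟨(j : ℕ) * W, ht0⟩ : Fin T)]
  · have hval : ((⟨(j : ℕ) * W, ht0⟩ : Fin T) : ℕ) = (j : ℕ) * W := rfl
    simp only [hval]
    rw [if_pos ⟨le_refl _, by omega⟩]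
    show (g u).elim 0 _ = _
    cases hgu : g u with
    | none => rfl
    | some v =>
      show (if ∃ j' : Fin d, (j : ℕ) * W = (j' : ℕ) * W ∧ v j' = true then k else 0)
        = if v j then k else 0
      by_cases hvj : v j = true
      · rw [if_pos ⟨j, rfl, hvj⟩, if_pos hvj]
      · rw [if_neg, if_neg hvj]
        rintro ⟨j', hj', hvj'⟩
        have hjj : j' = j := Fin.ext (Nat.eq_of_mul_eq_mul_right hW hj'.symm)
        rw [hjj] at hvj'
        exact hvj hvj'
  · intro b _ hb
    split_ifs with hcond
    · show (g u).elim 0 _ = 0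
      cases hgu : g u with
      | none => rfl
      | some v =>
        show (if ∃ j' : Fin d, (b : ℕ) = (j' : ℕ) * W ∧ v j' = true then k else 0) = 0
        rw [if_neg]
        rintro ⟨j', hj', _⟩
        obtain ⟨h1, h2⟩ := hcond
        have hb1 : (j : ℕ) * W ≤ (j' : ℕ) * W := by omega
        have hb2 : (j' : ℕ) * W < ((j : ℕ) + 1) * W := by rw [add_mul, one_mul]; omega
        have hj1 : (j : ℕ) ≤ (j' : ℕ) := Nat.le_of_mul_le_mul_right hb1 hW
        have hj2 : (j' : ℕ) < (j : ℕ) + 1 := lt_of_mul_lt_mul_right hb2 (Nat.zero_le W)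
        have hjj : (j' : ℕ) = (j : ℕ) := by omega
        exact hb (Fin.ext (by rw [hj', hjj]))
    · rfl
  · intro hmem
    exact absurd (Finset.mem_univ _) hmem

lemma sum_map_toMS {d n : ℕ} (g : Fin n → Option (V d)) (f : V d → ℕ) :
    ((toMS g).map f).sum = ∑ u : Fin n, ((opt (g u)).map f).sum :=
  map_sum (⟨⟨fun m => (m.map f).sum, by simp⟩, fun a b => by simp⟩ :
    Multiset (V d) →+ ℕ) (fun u => opt (g u)) Finset.univ

lemma freqGe_enc {k W T d n : ℕ} (hk : 0 < k) (hW : 0 < W) (g : Fin n → Option (V d))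
    (j : Fin d) (hjT : ((j : ℕ) + 1) * W ≤ T) :
    freqGe k (enc k W T g) ((j : ℕ) * W + 1) ((j : ℕ) * W + W)
      = ((toMS g).map fun v => if v j then (1 : ℕ) else 0).sum := by
  classical
  rw [sum_map_toMS]
  unfold freqGe
  rw [Finset.card_filter]
  refine Finset.sum_congr rfl fun u _ => ?_
  rw [winCount_enc hW g j hjT u]
  cases hgu : g u with
  | none => simp [opt, Nat.le_zero, hk.ne']
  | some v =>
    cases hvj : v j
    · simp [opt, hvj, Nat.le_zero, hk.ne']
    · simp [opt, hvj]

lemma bij_sum {d n : ℕ} (x : V d) (E : Multiset (V d))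
    (A A' : Finset (Fin n → Option (V d)))
    (hA : ∀ g, g ∈ A ↔ toMS g = E) (hA' : ∀ g, g ∈ A' ↔ toMS g = x ::ₘ E)
    (H : (Fin n → Option (V d)) → Fin n → ℝ≥0∞)
    [∀ g : Fin n → Option (V d), DecidablePred fun s : Fin n => g s = some x]
    [∀ g : Fin n → Option (V d), DecidablePred fun s : Fin n => g s = none] :
    ∑ g ∈ A', ∑ s ∈ Finset.univ.filter (fun s => g s = some x),
        H (Function.update g s none) s
      = ∑ g ∈ A, ∑ s ∈ Finset.univ.filter (fun s => g s = none), H g s := by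
  classical
  rw [Finset.sum_sigma', Finset.sum_sigma']
  refine Finset.sum_nbij' (fun p => ⟨Function.update p.1 p.2 none, p.2⟩)
    (fun p => ⟨Function.update p.1 p.2 (some x), p.2⟩) ?_ ?_ ?_ ?_ ?_
  · rintro ⟨g, s⟩ hp
    rw [Finset.mem_sigma, Finset.mem_filter] at hp ⊢
    obtain ⟨hg, -, hgs⟩ := hp
    refine ⟨?_, Finset.mem_univ _, Function.update_self _ _ _⟩
    rw [hA]
    have h1 : x ::ₘ toMS (Function.update g s none) = x ::ₘ E := by
      rw [toMS_update_none hgs]; exact (hA' g).1 hg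
    exact (Multiset.cons_inj_right x).1 h1
  · rintro ⟨g, s⟩ hp
    rw [Finset.mem_sigma, Finset.mem_filter] at hp ⊢
    obtain ⟨hg, -, hgs⟩ := hp
    refine ⟨?_, Finset.mem_univ _, Function.update_self _ _ _⟩
    rw [hA']
    rw [toMS_update_some hgs x, (hA g).1 hg]
  · rintro ⟨g, s⟩ hp
    rw [Finset.mem_sigma, Finset.mem_filter] at hp
    obtain ⟨-, -, hgs⟩ := hp
    have h1 : Function.update (Function.update g s none) s (some x) = g := by
      rw [Function.update_idem, ← hgs, Function.update_eq_self]
    simp only [h1]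
  · rintro ⟨g, s⟩ hp
    rw [Finset.mem_sigma, Finset.mem_filter] at hp
    obtain ⟨-, -, hgs⟩ := hp
    have h1 : Function.update (Function.update g s (some x)) s none = g := by
      rw [Function.update_idem, ← hgs, Function.update_eq_self]
    simp only [h1]
  · rintro ⟨g, s⟩ _
    rfl

lemma arith {N N' c r : ℝ≥0∞} (hN0 : N ≠ 0) (hNt : N ≠ ⊤) (hN'0 : N' ≠ 0) (hN't : N' ≠ ⊤)
    (hc0 : c ≠ 0) (hct : c ≠ ⊤) (hr0 : r ≠ 0) (hrt : r ≠ ⊤)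
    (hcard : N' * c = N * r) (S S' Eexp Δ : ℝ≥0∞)
    (h : c * S' ≤ Eexp * (r * S) + (N' * c) * Δ) :
    N'⁻¹ * S' ≤ Eexp * (N⁻¹ * S) + Δ := by
  have h2 := mul_le_mul_right h (N' * c)⁻¹
  have k1 : (N' * c)⁻¹ * (c * S') = N'⁻¹ * S' := by
    rw [ENNReal.mul_inv (Or.inl hN'0) (Or.inl hN't), mul_assoc]
    congr 1
    rw [← mul_assoc, ENNReal.inv_mul_cancel hc0 hct, one_mul]
  have k2 : (N' * c)⁻¹ * (Eexp * (r * S)) = Eexp * (N⁻¹ * S) := by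
    rw [hcard, ENNReal.mul_inv (Or.inl hN0) (Or.inl hNt), mul_left_comm]
    congr 1
    rw [mul_assoc]
    congr 1
    rw [← mul_assoc, ENNReal.inv_mul_cancel hr0 hrt, one_mul]
  have k3 : (N' * c)⁻¹ * ((N' * c) * Δ) = Δ := by
    rw [← mul_assoc, ENNReal.inv_mul_cancel (mul_ne_zero hN'0 hc0)
      (ENNReal.mul_ne_top hN't hct), one_mul]
  calc N'⁻¹ * S' = (N' * c)⁻¹ * (c * S') := k1.symm
    _ ≤ (N' * c)⁻¹ * (Eexp * (r * S) + (N' * c) * Δ) := h2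
    _ = Eexp * (N⁻¹ * S) + Δ := by rw [mul_add, k2, k3]

lemma sum_aff {ι : Type*} (T : Finset ι) (f : ι → ℝ≥0∞) (Eexp Δ : ℝ≥0∞) :
    ∑ s ∈ T, (Eexp * f s + Δ) = Eexp * ∑ s ∈ T, f s + (T.card : ℝ≥0∞) * Δ := by
  rw [Finset.sum_add_distrib, Finset.sum_const, nsmul_eq_mul, Finset.mul_sum]

lemma key_ineq {d n : ℕ} (x : V d) (E : Multiset (V d)) (hE : Multiset.card E + 1 ≤ n)
    (A A' : Finset (Fin n → Option (V d)))
    (hA : ∀ g, g ∈ A ↔ toMS g = E) (hA' : ∀ g, g ∈ A' ↔ toMS g = x ::ₘ E)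
    (μ : (Fin n → Option (V d)) → ℝ≥0∞) (Eexp Δ : ℝ≥0∞)
    (hDP : ∀ g s a, μ g ≤ Eexp * μ (Function.update g s a) + Δ) :
    ((A'.card : ℝ≥0∞)⁻¹ * ∑ g ∈ A', μ g
        ≤ Eexp * ((A.card : ℝ≥0∞)⁻¹ * ∑ g ∈ A, μ g) + Δ)
    ∧ ((A.card : ℝ≥0∞)⁻¹ * ∑ g ∈ A, μ g
        ≤ Eexp * ((A'.card : ℝ≥0∞)⁻¹ * ∑ g ∈ A', μ g) + Δ) := by
  classical
  set c : ℕ := Multiset.count x (x ::ₘ E) with hc_def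
  set r : ℕ := n - Multiset.card E with hr_def
  have hc : ∀ g ∈ A', (Finset.univ.filter fun s : Fin n => g s = some x).card = c := by
    intro g hg
    rw [← count_toMS, (hA' g).1 hg]
  have hr : ∀ g ∈ A, (Finset.univ.filter fun s : Fin n => g s = none).card = r := by
    intro g hg
    rw [card_none_filter, (hA g).1 hg]
  have hc0 : c ≠ 0 := by
    have := Multiset.count_pos.2 (Multiset.mem_cons_self x E)
    omega
  have hr0 : r ≠ 0 := by omega
  have hAne : A.Nonempty := by
    obtain ⟨g, hg⟩ := exists_toMS (n := n) E (by omega)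
    exact ⟨g, (hA g).2 hg⟩
  have hA'ne : A'.Nonempty := by
    obtain ⟨g, hg⟩ := exists_toMS (n := n) (x ::ₘ E) (by rw [Multiset.card_cons]; omega)
    exact ⟨g, (hA' g).2 hg⟩
  have hN0 : (A.card : ℝ≥0∞) ≠ 0 := by
    simpa using Finset.card_ne_zero_of_mem hAne.choose_spec
  have hN'0 : (A'.card : ℝ≥0∞) ≠ 0 := by
    simpa using Finset.card_ne_zero_of_mem hA'ne.choose_spec
  have hNt : (A.card : ℝ≥0∞) ≠ ⊤ := ENNReal.natCast_ne_top _
  have hN't : (A'.card : ℝ≥0∞) ≠ ⊤ := ENNReal.natCast_ne_top _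
  have hcC0 : (c : ℝ≥0∞) ≠ 0 := by exact_mod_cast Nat.cast_ne_zero.2 hc0
  have hrC0 : (r : ℝ≥0∞) ≠ 0 := by exact_mod_cast Nat.cast_ne_zero.2 hr0
  have hcCt : (c : ℝ≥0∞) ≠ ⊤ := ENNReal.natCast_ne_top _
  have hrCt : (r : ℝ≥0∞) ≠ ⊤ := ENNReal.natCast_ne_top _
  -- the cardinality identity via the bijection with `H = 1`
  have hone := bij_sum x E A A' hA hA' (fun _ _ => (1 : ℝ≥0∞))
  have hcard : (A'.card : ℝ≥0∞) * c = (A.card : ℝ≥0∞) * r := by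
    have h1 : ∑ g ∈ A', ∑ _s ∈ Finset.univ.filter (fun s : Fin n => g s = some x),
        (1 : ℝ≥0∞) = (A'.card : ℝ≥0∞) * c := by
      rw [Finset.sum_congr rfl fun g hg => by
        rw [Finset.sum_const, hc g hg, nsmul_eq_mul, mul_one]]
      rw [Finset.sum_const, nsmul_eq_mul]
    have h2 : ∑ g ∈ A, ∑ _s ∈ Finset.univ.filter (fun s : Fin n => g s = none),
        (1 : ℝ≥0∞) = (A.card : ℝ≥0∞) * r := by
      rw [Finset.sum_congr rfl fun g hg => by
        rw [Finset.sum_const, hr g hg, nsmul_eq_mul, mul_one]]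
      rw [Finset.sum_const, nsmul_eq_mul]
    rw [← h1, ← h2]
    exact hone
  -- expansion of `c * Σ'` and `r * Σ` as pair sums
  have e1 : (c : ℝ≥0∞) * ∑ g ∈ A', μ g
      = ∑ g ∈ A', ∑ _s ∈ Finset.univ.filter (fun s : Fin n => g s = some x), μ g := by
    rw [Finset.mul_sum]
    refine Finset.sum_congr rfl fun g hg => ?_
    rw [Finset.sum_const, hc g hg, nsmul_eq_mul]
  have e2 : (r : ℝ≥0∞) * ∑ g ∈ A, μ g
      = ∑ g ∈ A, ∑ _s ∈ Finset.univ.filter (fun s : Fin n => g s = none), μ g := by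
    rw [Finset.mul_sum]
    refine Finset.sum_congr rfl fun g hg => ?_
    rw [Finset.sum_const, hr g hg, nsmul_eq_mul]
  -- the transported sums
  have t1 := bij_sum x E A A' hA hA' (fun g _ => μ g)
  have t2 := bij_sum x E A A' hA hA' (fun g s => μ (Function.update g s (some x)))
  have t2' : ∑ g ∈ A', ∑ s ∈ Finset.univ.filter (fun s : Fin n => g s = some x),
      μ (Function.update (Function.update g s none) s (some x))
      = ∑ g ∈ A', ∑ _s ∈ Finset.univ.filter (fun s : Fin n => g s = some x), μ g := by
    refine Finset.sum_congr rfl fun g _ => Finset.sum_congr rfl fun s hs => ?_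
    rw [Finset.mem_filter] at hs
    rw [Function.update_idem, ← hs.2, Function.update_eq_self]
  constructor
  · -- A' side bounded by A side
    have hstep : (c : ℝ≥0∞) * ∑ g ∈ A', μ g
        ≤ Eexp * ((r : ℝ≥0∞) * ∑ g ∈ A, μ g) + ((A'.card : ℝ≥0∞) * c) * Δ := by
      rw [e1]
      calc ∑ g ∈ A', ∑ s ∈ Finset.univ.filter (fun s : Fin n => g s = some x), μ g
          ≤ ∑ g ∈ A', ∑ s ∈ Finset.univ.filter (fun s : Fin n => g s = some x),
            (Eexp * μ (Function.update g s none) + Δ) := by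
            exact Finset.sum_le_sum fun g _ => Finset.sum_le_sum fun s _ => hDP g s none
        _ = Eexp * (∑ g ∈ A', ∑ s ∈ Finset.univ.filter (fun s : Fin n => g s = some x),
              μ (Function.update g s none)) + ((A'.card : ℝ≥0∞) * c) * Δ := by
            have hinner : ∀ g ∈ A', ∑ s ∈ Finset.univ.filter (fun s : Fin n => g s = some x),
                (Eexp * μ (Function.update g s none) + Δ)
                = Eexp * (∑ s ∈ Finset.univ.filter (fun s : Fin n => g s = some x),
                    μ (Function.update g s none)) + (c : ℝ≥0∞) * Δ := fun g hg => by
              rw [sum_aff, hc g hg]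
            rw [Finset.sum_congr rfl hinner, Finset.sum_add_distrib, ← Finset.mul_sum,
              Finset.sum_const, nsmul_eq_mul]
            ring
        _ = Eexp * ((r : ℝ≥0∞) * ∑ g ∈ A, μ g) + ((A'.card : ℝ≥0∞) * c) * Δ := by
            rw [t1, e2]
    exact arith hN0 hNt hN'0 hN't hcC0 hcCt hrC0 hrCt hcard _ _ _ _ hstep
  · -- A side bounded by A' side
    have hstep : (r : ℝ≥0∞) * ∑ g ∈ A, μ g
        ≤ Eexp * ((c : ℝ≥0∞) * ∑ g ∈ A', μ g) + ((A.card : ℝ≥0∞) * r) * Δ := by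
      rw [e2]
      calc ∑ g ∈ A, ∑ s ∈ Finset.univ.filter (fun s : Fin n => g s = none), μ g
          ≤ ∑ g ∈ A, ∑ s ∈ Finset.univ.filter (fun s : Fin n => g s = none),
            (Eexp * μ (Function.update g s (some x)) + Δ) := by
            exact Finset.sum_le_sum fun g _ => Finset.sum_le_sum fun s _ => hDP g s (some x)
        _ = Eexp * (∑ g ∈ A, ∑ s ∈ Finset.univ.filter (fun s : Fin n => g s = none),
              μ (Function.update g s (some x))) + ((A.card : ℝ≥0∞) * r) * Δ := by
            have hinner : ∀ g ∈ A, ∑ s ∈ Finset.univ.filter (fun s : Fin n => g s = none),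
                (Eexp * μ (Function.update g s (some x)) + Δ)
                = Eexp * (∑ s ∈ Finset.univ.filter (fun s : Fin n => g s = none),
                    μ (Function.update g s (some x))) + (r : ℝ≥0∞) * Δ := fun g hg => by
              rw [sum_aff, hr g hg]
            rw [Finset.sum_congr rfl hinner, Finset.sum_add_distrib, ← Finset.mul_sum,
              Finset.sum_const, nsmul_eq_mul]
            ring
        _ = Eexp * ((c : ℝ≥0∞) * ∑ g ∈ A', μ g) + ((A.card : ℝ≥0∞) * r) * Δ := by
            rw [← t2, t2', ← e1]
    exact arith hN'0 hN't hN0 hNt hrC0 hrCt hcC0 hcCt hcard.symm _ _ _ _ hstep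

end Marg

open scoped ENNReal

/-- with `T ≥ W·d` and `U = n`, an item-level DP algorithm for
fixed-window `freq≥k` in the bundle setting yields a DP algorithm for the
1-way marginal problem of dimension `d` on at most `n` vectors. -/
theorem marginal_from_fixed_window_bundle (k T W d n : ℕ)
    (hk : 0 < k) (hW : 0 < W) (hd : 0 < d) (hn : 0 < n) (hT : W * d ≤ T)
    (ε δ α β : ℝ) (hε : 0 ≤ ε) (hδ : 0 ≤ δ) (hα : 0 ≤ α) (hβ0 : 0 ≤ β) (hβ1 : β ≤ 1)
    (h : ∃ M₁ : Dataset T n → PMF (Fin (T - W + 1) → ℝ),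
      IsDP ItemNeighbor M₁ ε δ ∧ HasUtility M₁ (fwVal k W) α β) :
    ∃ M₂ : {D : Multiset (Fin d → Bool) // Multiset.card D ≤ n} → PMF (Fin d → ℝ),
      IsDP (fun D D' => AddRemoveNeighbor D.1 D'.1) M₂ ε δ ∧
      HasUtility M₂ (fun D => margVal D.1) α β := by
  classical
  obtain ⟨M₁, hM₁DP, hM₁U⟩ := h
  -- index of the window corresponding to coordinate `j`
  have hidx : ∀ j : Fin d, ((j : ℕ) + 1) * W ≤ T := by
    intro j
    have h1 : ((j : ℕ) + 1) * W ≤ d * W := Nat.mul_le_mul_right W j.isLt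
    have h2 : d * W = W * d := Nat.mul_comm d W
    omega
  have hidx' : ∀ j : Fin d, (j : ℕ) * W < T - W + 1 := by
    intro j
    have h1 := hidx j
    rw [add_mul, one_mul] at h1
    omega
  set idx : Fin d → Fin (T - W + 1) := fun j => ⟨(j : ℕ) * W, hidx' j⟩ with hidx_def
  set reindex : (Fin (T - W + 1) → ℝ) → (Fin d → ℝ) := fun o j => o (idx j) with hreindex
  set Arr : Multiset (Marg.V d) → Finset (Fin n → Option (Marg.V d)) :=
    fun E => Finset.univ.filter (fun g => Marg.toMS g = E) with hArr_def
  have hArr : ∀ E g, g ∈ Arr E ↔ Marg.toMS g = E := by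
    intro E g
    simp [hArr_def]
  have hArrNe : ∀ E : Multiset (Marg.V d), Multiset.card E ≤ n → (Arr E).Nonempty := by
    intro E hE
    obtain ⟨g, hg⟩ := Marg.exists_toMS (n := n) E hE
    exact ⟨g, (hArr E g).2 hg⟩
  set M₂ : {D : Multiset (Fin d → Bool) // Multiset.card D ≤ n} → PMF (Fin d → ℝ) :=
    fun D => (PMF.uniformOfFinset (Arr D.1) (hArrNe _ D.2)).bind
      (fun g => (M₁ (Marg.enc k W T g)).map reindex) with hM₂_def
  have hM₂ : ∀ (D : {D : Multiset (Fin d → Bool) // Multiset.card D ≤ n})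
      (s : Set (Fin d → ℝ)),
      (M₂ D).toOuterMeasure s = ((Arr D.1).card : ℝ≥0∞)⁻¹ *
        ∑ g ∈ Arr D.1, (M₁ (Marg.enc k W T g)).toOuterMeasure (reindex ⁻¹' s) := by
    intro D s
    rw [hM₂_def]
    rw [PMF.toOuterMeasure_bind_apply]
    rw [tsum_eq_sum (s := Arr D.1)
      (fun g hg => by rw [PMF.uniformOfFinset_apply_of_notMem _ hg, zero_mul])]
    rw [Finset.mul_sum]
    refine Finset.sum_congr rfl fun g hg => ?_
    rw [PMF.uniformOfFinset_apply_of_mem _ hg, PMF.toOuterMeasure_map_apply]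
  refine ⟨M₂, ?_, ?_⟩
  · -- differential privacy
    intro D D' hnb s
    obtain ⟨x, hx | hx⟩ := hnb
    · -- D'.1 = x ::ₘ D.1
      have hE : Multiset.card D.1 + 1 ≤ n := by
        have := D'.2
        rw [hx, Multiset.card_cons] at this
        exact this
      have hkey := Marg.key_ineq x D.1 hE (Arr D.1) (Arr D'.1) (hArr D.1)
        (fun g => by rw [hArr, hx])
        (fun g => (M₁ (Marg.enc k W T g)).toOuterMeasure (reindex ⁻¹' s))
        (ENNReal.ofReal (Real.exp ε)) (ENNReal.ofReal δ)
        (fun g s' a => hM₁DP (Marg.enc k W T g) (Marg.enc k W T (Function.update g s' a))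
          (Marg.enc_neighbor k W T g s' a) (reindex ⁻¹' s))
      rw [hM₂ D s, hM₂ D' s]
      exact hkey.2
    · -- D.1 = x ::ₘ D'.1
      have hE : Multiset.card D'.1 + 1 ≤ n := by
        have := D.2
        rw [hx, Multiset.card_cons] at this
        exact this
      have hkey := Marg.key_ineq x D'.1 hE (Arr D'.1) (Arr D.1) (hArr D'.1)
        (fun g => by rw [hArr, hx])
        (fun g => (M₁ (Marg.enc k W T g)).toOuterMeasure (reindex ⁻¹' s))
        (ENNReal.ofReal (Real.exp ε)) (ENNReal.ofReal δ)
        (fun g s' a => hM₁DP (Marg.enc k W T g) (Marg.enc k W T (Function.update g s' a))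
          (Marg.enc_neighbor k W T g s' a) (reindex ⁻¹' s))
      rw [hM₂ D s, hM₂ D' s]
      exact hkey.1
  · -- utility
    intro D j
    have hval : ∀ g ∈ Arr D.1,
        fwVal k W (Marg.enc k W T g) (idx j) = margVal D.1 j := by
      intro g hg
      have hg' : Marg.toMS g = D.1 := (hArr D.1 g).1 hg
      unfold fwVal margVal
      rw [← hg']
      have hidxval : ((idx j : Fin (T - W + 1)) : ℕ) = (j : ℕ) * W := rfl
      rw [hidxval, Marg.freqGe_enc hk hW g j (hidx j)]
    rw [hM₂ D {o | |o j - margVal D.1 j| ≤ α}]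
    have hpre : ∀ g ∈ Arr D.1,
        reindex ⁻¹' {o : Fin d → ℝ | |o j - margVal D.1 j| ≤ α}
          = {o : Fin (T - W + 1) → ℝ | |o (idx j) - fwVal k W (Marg.enc k W T g) (idx j)| ≤ α} := by
      intro g hg
      rw [Set.preimage_setOf_eq]
      have : reindex = fun o j => o (idx j) := hreindex
      ext o
      simp only [Set.mem_setOf_eq, this, hval g hg]
    have hterm : ∀ g ∈ Arr D.1, ENNReal.ofReal (1 - β)
        ≤ (M₁ (Marg.enc k W T g)).toOuterMeasure
            (reindex ⁻¹' {o : Fin d → ℝ | |o j - margVal D.1 j| ≤ α}) := by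
      intro g hg
      rw [hpre g hg]
      exact hM₁U (Marg.enc k W T g) (idx j)
    have hcard0 : ((Arr D.1).card : ℝ≥0∞) ≠ 0 := by
      have := hArrNe D.1 D.2
      simpa using Finset.card_ne_zero_of_mem this.choose_spec
    have hcardt : ((Arr D.1).card : ℝ≥0∞) ≠ ⊤ := ENNReal.natCast_ne_top _
    calc ENNReal.ofReal (1 - β)
        = ((Arr D.1).card : ℝ≥0∞)⁻¹ * (((Arr D.1).card : ℝ≥0∞) * ENNReal.ofReal (1 - β)) := by
          rw [← mul_assoc, ENNReal.inv_mul_cancel hcard0 hcardt, one_mul]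
      _ ≤ ((Arr D.1).card : ℝ≥0∞)⁻¹ *
          ∑ g ∈ Arr D.1, (M₁ (Marg.enc k W T g)).toOuterMeasure
            (reindex ⁻¹' {o : Fin d → ℝ | |o j - margVal D.1 j| ≤ α}) := by
          refine mul_le_mul_right ?_ _
          calc ((Arr D.1).card : ℝ≥0∞) * ENNReal.ofReal (1 - β)
              = ∑ _g ∈ Arr D.1, ENNReal.ofReal (1 - β) := by
                rw [Finset.sum_const, nsmul_eq_mul]
            _ ≤ _ := Finset.sum_le_sum hterm
end
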